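/- arXiv:2506.05581 — 5 statements merged into one kernel-verified Lean document; each statement's English description precedes it below -/
import Mathlib

section
/- Let k ≥ 2 and q ≥ 1 be integers. There exists a Sperner labeling c of Δ_{k,q} ∩ ℤ^k for which the number of cells of the regular triangulation 𝒯 of Δ_{k,q} that are non-monochromatic for c is at most q^{k−1} − (q − 1)^{k−1}. In particular, m_{k,q} ≤ q^{k−1} − (q − 1)^{k−1}. -/
open Finset

/-- Membership in the discrete simplex `Δ_{k,q} ∩ ℤ^k`:
integer vectors with nonnegative entries summing to `q`. -/
def inSimplex (k q : ℕ) (v : Fin k → ℤ) : Prop :=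
  (∀ i, 0 ≤ v i) ∧ (∑ i, v i) = (q : ℤ)

/-- The nonzero entries of `d`, read from left to right, alternate in sign. -/
def AltSign {k : ℕ} (d : Fin k → ℤ) : Prop :=
  ∀ i j : Fin k, i < j → d i ≠ 0 → d j ≠ 0 →
    (∀ l : Fin k, i < l → l < j → d l = 0) → d i = - d j

/-- Adjacency in the graph `G_k` on `Δ_{k,q} ∩ ℤ^k`. -/
def AdjG (k q : ℕ) (v w : Fin k → ℤ) : Prop :=
  v ≠ w ∧ inSimplex k q v ∧ inSimplex k q w ∧
    (∀ i, v i - w i = -1 ∨ v i - w i = 0 ∨ v i - w i = 1) ∧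
    (Finset.univ.filter (fun i => v i - w i = 1)).card =
      (Finset.univ.filter (fun i => v i - w i = -1)).card ∧
    AltSign (fun i => v i - w i)

/-- A cell of the regular triangulation `𝒯` of `Δ_{k,q}`: a `k`-element subset of
`Δ_{k,q} ∩ ℤ^k` whose elements are pairwise adjacent in `G_k`. -/
def IsCell (k q : ℕ) (S : Finset (Fin k → ℤ)) : Prop :=
  S.card = k ∧ (∀ v ∈ S, inSimplex k q v) ∧
    (∀ v ∈ S, ∀ w ∈ S, v ≠ w → AdjG k q v w)

/-- A Sperner labeling of `Δ_{k,q} ∩ ℤ^k`. -/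
def IsSperner (k q : ℕ) (c : (Fin k → ℤ) → Fin k) : Prop :=
  ∀ v : Fin k → ℤ, inSimplex k q v → ∀ i : Fin k, v i = 0 → c v ≠ i

/-- A cell is non-monochromatic for `c` if `c` takes at least two values on it. -/
def NonMono {k : ℕ} (c : (Fin k → ℤ) → Fin k) (S : Finset (Fin k → ℤ)) : Prop :=
  ∃ u ∈ S, ∃ v ∈ S, c u ≠ c v

/-- Membership in `W_{k,q} = R_{k,q} ∩ ℤ^{k-1}`. -/
def inW (k q : ℕ) (w : Fin (k-1) → ℤ) : Prop :=
  (∀ i, 0 ≤ w i) ∧ (∀ i, w i ≤ (q : ℤ)) ∧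
    ∀ i j : Fin (k-1), i ≤ j → w i ≤ w j

/-- A permutation `π` of `{1,…,k-1}` (here `Fin (k-1)`) is consistent with `w`
if `w i = w (i+1)` implies `π i < π (i+1)`. -/
def Consistent (k : ℕ) (w : Fin (k-1) → ℤ) (π : Equiv.Perm (Fin (k-1))) : Prop :=
  ∀ i j : Fin (k-1), (i : ℕ) + 1 = (j : ℕ) → w i = w j → π i < π j

/-- The simplex `σ(w,π) ⊆ ℝ^{k-1}`. -/
def simplexSet (k : ℕ) (w : Fin (k-1) → ℤ) (π : Equiv.Perm (Fin (k-1))) :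
    Set (Fin (k-1) → ℝ) :=
  {y | (∀ i, 0 ≤ y i) ∧
    (∀ s, 0 ≤ y (π s) - (w (π s) : ℝ)) ∧
    (∀ s, y (π s) - (w (π s) : ℝ) ≤ 1) ∧
    (∀ s t : Fin (k-1), s ≤ t →
      y (π s) - (w (π s) : ℝ) ≤ y (π t) - (w (π t) : ℝ))}

/-- Coercion of an integer vector to a real vector. -/
def toR {n : ℕ} (w : Fin n → ℤ) : Fin n → ℝ := fun i => (w i : ℝ)

/-- Adjacency in the graph `G'_k` on `W_{k,q}`. -/
def AdjG' (k q : ℕ) (w1 w2 : Fin (k-1) → ℤ) : Prop :=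
  w1 ≠ w2 ∧ inW k q w1 ∧ inW k q w2 ∧
    ∃ w : Fin (k-1) → ℤ, ∃ π : Equiv.Perm (Fin (k-1)),
      inW k q w ∧ Consistent k w π ∧
        toR w1 ∈ simplexSet k w π ∧ toR w2 ∈ simplexSet k w π

/-- Adjacency in the graph `G''_k` on `W_{k,q}`. -/
def AdjG'' (k q : ℕ) (w1 w2 : Fin (k-1) → ℤ) : Prop :=
  w1 ≠ w2 ∧ inW k q w1 ∧ inW k q w2 ∧
    ((∀ i, w1 i - w2 i = 0 ∨ w1 i - w2 i = 1) ∨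
      (∀ i, w1 i - w2 i = -1 ∨ w1 i - w2 i = 0))

/-- Auxiliary extension of `y : Fin (k-1) → ℤ` to `ℕ`, taking value `q` beyond `k-2`. -/
def extW (k q : ℕ) (y : Fin (k-1) → ℤ) : ℕ → ℤ := fun n =>
  if h : n < k - 1 then y ⟨n, h⟩ else (q : ℤ)

/-- The map `φ(y₁,…,y_{k-1}) = (y₁, y₂ - y₁, …, y_{k-1} - y_{k-2}, q - y_{k-1})`. -/
def phi (k q : ℕ) (y : Fin (k-1) → ℤ) : Fin k → ℤ := fun i =>
  extW k q y (i : ℕ) - (if (i : ℕ) = 0 then 0 else extW k q y ((i : ℕ) - 1))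

/-- The map `ψ(x₁,…,x_k) = (x₁, x₁+x₂, …, x₁+⋯+x_{k-1})`. -/
def psi (k : ℕ) (x : Fin k → ℤ) : Fin (k-1) → ℤ := fun j =>
  ∑ i ∈ Finset.univ.filter (fun i : Fin k => (i : ℕ) ≤ (j : ℕ)), x i

/-- Auxiliary extension of `y : Fin (k-1) → ℝ` to `ℕ`, taking value `q` beyond `k-2`. -/
def extWR (k q : ℕ) (y : Fin (k-1) → ℝ) : ℕ → ℝ := fun n =>
  if h : n < k - 1 then y ⟨n, h⟩ else (q : ℝ)

/-- The map `φ` extended to `ℝ^{k-1}` by the same formula. -/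
def phiR (k q : ℕ) (y : Fin (k-1) → ℝ) : Fin k → ℝ := fun i =>
  extWR k q y (i : ℕ) - (if (i : ℕ) = 0 then 0 else extWR k q y ((i : ℕ) - 1))

/-- partial sums of a `Fin k` vector, indexed by `ℕ`. -/
def Pnat (k : ℕ) (e : Fin k → ℤ) (m : ℕ) : ℤ :=
  ∑ i ∈ Finset.univ.filter (fun i : Fin k => (i : ℕ) ≤ m), e i

def psi' (k : ℕ) (x : Fin k → ℤ) : Fin (k-1) → ℤ := fun j =>
  ∑ i ∈ Finset.univ.filter (fun i : Fin k => (i : ℕ) ≤ (j : ℕ)), x i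

lemma psi_eq_pnat (k : ℕ) (x : Fin k → ℤ) (j : Fin (k-1)) :
    psi' k x j = Pnat k x (j : ℕ) := rfl

lemma pnat_succ (k : ℕ) (e : Fin k → ℤ) (m : ℕ) :
    Pnat k e (m + 1) = Pnat k e m + (if h : m + 1 < k then e ⟨m+1, h⟩ else 0) := by
  classical
  unfold Pnat
  by_cases h : m + 1 < k
  · rw [dif_pos h]
    have hsplit : (Finset.univ.filter (fun i : Fin k => (i : ℕ) ≤ m + 1))
        = insert (⟨m+1, h⟩ : Fin k) (Finset.univ.filter (fun i : Fin k => (i : ℕ) ≤ m)) := by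
      ext i
      simp only [mem_filter, mem_univ, true_and, mem_insert]
      constructor
      · intro hi
        rcases Nat.lt_or_ge (i : ℕ) (m+1) with h1 | h1
        · right; omega
        · left; apply Fin.ext; simp; omega
      · rintro (rfl | hi)
        · simp
        · omega
    rw [hsplit, Finset.sum_insert (by simp)]
    ring
  · rw [dif_neg h]
    have : (Finset.univ.filter (fun i : Fin k => (i : ℕ) ≤ m + 1))
        = (Finset.univ.filter (fun i : Fin k => (i : ℕ) ≤ m)) := by
      ext i
      simp only [mem_filter, mem_univ, true_and]
      have := i.isLt; omega
    rw [this]; ring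

lemma pnat_total (k : ℕ) (e : Fin k → ℤ) (m : ℕ) (hm : k - 1 ≤ m) :
    Pnat k e m = ∑ i, e i := by
  unfold Pnat
  congr 1
  ext i
  simp only [mem_filter, mem_univ, true_and, iff_true]
  have := i.isLt; omega

lemma pnat_zero (k : ℕ) (e : Fin k → ℤ) (hk : 0 < k) :
    Pnat k e 0 = e ⟨0, hk⟩ := by
  unfold Pnat
  rw [show (Finset.univ.filter (fun i : Fin k => (i : ℕ) ≤ 0)) = {⟨0, hk⟩} from ?_]
  · simp
  · ext i
    simp only [mem_filter, mem_univ, true_and, mem_singleton]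
    constructor
    · intro h; apply Fin.ext; simpa using h
    · rintro rfl; simp

lemma pnat_determines (k : ℕ) (x y : Fin k → ℤ)
    (h : ∀ m : ℕ, Pnat k x m = Pnat k y m) : x = y := by
  funext i
  rcases Nat.eq_zero_or_pos (i : ℕ) with h0 | h0
  · have hk : 0 < k := i.pos
    have hi : i = ⟨0, hk⟩ := Fin.ext h0
    rw [hi]
    have := h 0
    rwa [pnat_zero k x hk, pnat_zero k y hk] at this
  · have hlt : (i : ℕ) - 1 + 1 < k := by have := i.isLt; omega
    have hx := pnat_succ k x ((i : ℕ) - 1)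
    have hy := pnat_succ k y ((i : ℕ) - 1)
    rw [dif_pos hlt] at hx hy
    have hii : (⟨(i:ℕ) - 1 + 1, hlt⟩ : Fin k) = i := by apply Fin.ext; simp; omega
    rw [hii] at hx hy
    have h1 := h ((i:ℕ) - 1)
    have h2 := h ((i:ℕ) - 1 + 1)
    omega

section basics
variable (k q : ℕ)

lemma pnat_nonneg (x : Fin k → ℤ) (hx : ∀ i, 0 ≤ x i) (m : ℕ) : 0 ≤ Pnat k x m :=
  Finset.sum_nonneg (fun i _ => hx i)

lemma pnat_mono (x : Fin k → ℤ) (hx : ∀ i, 0 ≤ x i) {m m' : ℕ} (h : m ≤ m') :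
    Pnat k x m ≤ Pnat k x m' := by
  apply Finset.sum_le_sum_of_subset_of_nonneg
  · intro i hi; simp only [mem_filter, mem_univ, true_and] at *; omega
  · intro i _ _; exact hx i

lemma pnat_le_q (x : Fin k → ℤ) (hx : inSimplex k q x) (m : ℕ) :
    Pnat k x m ≤ (q : ℤ) := by
  calc Pnat k x m ≤ Pnat k x (k-1) := by
        rcases le_or_gt m (k-1) with h | h
        · exact pnat_mono k x hx.1 h
        · rw [pnat_total k x m (by omega), pnat_total k x (k-1) (by omega)]
  _ = ∑ i, x i := pnat_total k x (k-1) le_rfl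
  _ = (q : ℤ) := hx.2
end basics

/-- key alternating-sign lemma: all partial sums lie in {0, s}. -/
lemma alt_partial (k : ℕ) (e : Fin k → ℤ)
    (he1 : ∀ i, e i = -1 ∨ e i = 0 ∨ e i = 1) (halt : AltSign e)
    (hne : ∃ i, e i ≠ 0) :
    ∃ s : ℤ, (s = 1 ∨ s = -1) ∧ (∀ m : ℕ, Pnat k e m = 0 ∨ Pnat k e m = s) := by
  classical
  set N : Finset (Fin k) := Finset.univ.filter (fun i => e i ≠ 0) with hN
  have hNne : N.Nonempty := by
    obtain ⟨i, hi⟩ := hne; exact ⟨i, by simp [hN, hi]⟩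
  set F : Fin k := N.min' hNne with hF
  have hFmem : F ∈ N := N.min'_mem hNne
  have hFne : e F ≠ 0 := by simpa [hN] using hFmem
  set s : ℤ := e F with hs
  have hs1 : s = 1 ∨ s = -1 := by rcases he1 F with h | h | h <;> simp [hs, h] at * <;> tauto
  refine ⟨s, hs1, ?_⟩
  -- invariant by induction
  have key : ∀ m : ℕ, ((∀ i ∈ N, m < (i : ℕ)) ∧ Pnat k e m = 0) ∨
      (∃ l ∈ N, (l : ℕ) ≤ m ∧ (∀ i ∈ N, (i : ℕ) ≤ m → i ≤ l) ∧
        ((Pnat k e m = 0 ∧ e l = -s) ∨ (Pnat k e m = s ∧ e l = s))) := by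
    intro m
    induction m with
    | zero =>
      have hk : 0 < k := F.pos
      by_cases h0 : e ⟨0, hk⟩ = 0
      · left
        constructor
        · intro i hi
          rcases Nat.eq_zero_or_pos (i : ℕ) with h | h
          · exfalso
            have : i = ⟨0, hk⟩ := Fin.ext h
            rw [this] at hi; simp [hN, h0] at hi
          · exact h
        · rw [pnat_zero k e hk, h0]
      · right
        have hmem : (⟨0, hk⟩ : Fin k) ∈ N := by simp [hN, h0]
        have hF0 : F = ⟨0, hk⟩ := by
          apply le_antisymm (N.min'_le _ hmem)
          exact Fin.mk_le_of_le_val (Nat.zero_le _)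
        refine ⟨⟨0, hk⟩, hmem, le_rfl, fun i _ hi => Fin.mk_le_of_le_val (by omega), Or.inr ?_⟩
        rw [pnat_zero k e hk]
        rw [hs, hF0]
        exact ⟨rfl, rfl⟩
    | succ m ih =>
      by_cases hnew : ∃ h : m + 1 < k, e ⟨m+1, h⟩ ≠ 0
      · obtain ⟨hlt, hnz⟩ := hnew
        set i₀ : Fin k := ⟨m+1, hlt⟩ with hi₀
        have hi₀mem : i₀ ∈ N := by simp [hN, hnz]
        have hP : Pnat k e (m+1) = Pnat k e m + e i₀ := by
          rw [pnat_succ k e m, dif_pos hlt]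
        have hmax : ∀ i ∈ N, (i : ℕ) ≤ m + 1 → i ≤ i₀ := by
          intro i _ hi; exact Fin.mk_le_of_le_val hi
        rcases ih with ⟨hall, hPm⟩ | ⟨l, hlmem, hlle, hlmax, hcase⟩
        · -- no nonzero before: i₀ = F
          have hFi₀ : F = i₀ := by
            apply le_antisymm (N.min'_le _ hi₀mem)
            have := hall F hFmem
            exact Fin.mk_le_of_le_val (by omega)
          right
          refine ⟨i₀, hi₀mem, by simp [hi₀], hmax, Or.inr ?_⟩
          rw [hP, hPm, hs, hFi₀]; exact ⟨by ring, rfl⟩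
        · -- previous nonzero l exists; alternation between l and i₀
          have hlo : l < i₀ := by
            have : (l : ℕ) < (i₀ : ℕ) := by simp [hi₀]; omega
            exact this
          have hlnz : e l ≠ 0 := by simpa [hN] using hlmem
          have hbet : ∀ x : Fin k, l < x → x < i₀ → e x = 0 := by
            intro x hx1 hx2
            by_contra hxnz
            have hxmem : x ∈ N := by simp [hN, hxnz]
            have : (x : ℕ) < m + 1 := hx2
            have := hlmax x hxmem (by omega)
            exact absurd hx1 (not_lt.mpr this)
          have halt' := halt l i₀ hlo hlnz hnz hbet
          right
          rcases hcase with ⟨hPm, hel⟩ | ⟨hPm, hel⟩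
          · -- P = 0, e l = -s ⇒ e i₀ = s
            have : e i₀ = s := by rw [hel] at halt'; omega
            exact ⟨i₀, hi₀mem, by simp [hi₀], hmax, Or.inr ⟨by rw [hP, hPm, this]; ring, this⟩⟩
          · -- P = s, e l = s ⇒ e i₀ = -s
            have : e i₀ = -s := by rw [hel] at halt'; omega
            exact ⟨i₀, hi₀mem, by simp [hi₀], hmax, Or.inl ⟨by rw [hP, hPm, this]; ring, this⟩⟩
      · -- no new nonzero entry at m+1
        have hP : Pnat k e (m+1) = Pnat k e m := by
          rw [pnat_succ k e m]
          by_cases hlt : m + 1 < k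
          · rw [dif_pos hlt]
            have : e ⟨m+1, hlt⟩ = 0 := by
              by_contra hx; exact hnew ⟨hlt, hx⟩
            rw [this]; ring
          · rw [dif_neg hlt]; ring
        rcases ih with ⟨hall, hPm⟩ | ⟨l, hlmem, hlle, hlmax, hcase⟩
        · left
          refine ⟨?_, by rw [hP]; exact hPm⟩
          intro i hi
          have h1 := hall i hi
          rcases Nat.lt_or_ge (m+1) (i : ℕ) with h | h
          · exact h
          · exfalso
            have hieq : (i : ℕ) = m + 1 := by omega
            have hine : e i ≠ 0 := by simpa [hN] using hi
            apply hnew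
            refine ⟨by rw [← hieq]; exact i.isLt, ?_⟩
            have : (⟨m+1, by rw [← hieq]; exact i.isLt⟩ : Fin k) = i := Fin.ext hieq.symm
            rw [this]; exact hine
        · right
          refine ⟨l, hlmem, by omega, ?_, by rw [hP]; exact hcase⟩
          intro i hi hile
          rcases Nat.lt_or_ge m (i : ℕ) with h | h
          · exfalso
            have hieq : (i : ℕ) = m + 1 := by omega
            have hine : e i ≠ 0 := by simpa [hN] using hi
            apply hnew
            refine ⟨by rw [← hieq]; exact i.isLt, ?_⟩
            have : (⟨m+1, by rw [← hieq]; exact i.isLt⟩ : Fin k) = i := Fin.ext hieq.symm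
            rw [this]; exact hine
          · exact hlmax i hi h
  intro m
  rcases key m with ⟨_, h⟩ | ⟨_, _, _, _, ⟨h, _⟩ | ⟨h, _⟩⟩
  · exact Or.inl h
  · exact Or.inl h
  · exact Or.inr h
lemma pnat_sub (k : ℕ) (v w : Fin k → ℤ) (m : ℕ) :
    Pnat k (fun i => v i - w i) m = Pnat k v m - Pnat k w m := by
  unfold Pnat; rw [Finset.sum_sub_distrib]

lemma psi'_inj (k q : ℕ) (v w : Fin k → ℤ) (hv : inSimplex k q v) (hw : inSimplex k q w)
    (h : ∀ j : Fin (k-1), psi' k v j = psi' k w j) : v = w := by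
  apply pnat_determines k
  intro m
  rcases Nat.lt_or_ge m (k-1) with hm | hm
  · exact h ⟨m, hm⟩
  · rw [pnat_total k v m hm, pnat_total k w m hm, hv.2, hw.2]

lemma adj_sign (k q : ℕ) (v w : Fin k → ℤ) (h : AdjG k q v w) :
    ∃ s : ℤ, (s = 1 ∨ s = -1) ∧
      (∀ j : Fin (k-1), psi' k v j - psi' k w j = 0 ∨ psi' k v j - psi' k w j = s) ∧
      (∃ j : Fin (k-1), psi' k v j ≠ psi' k w j) := by
  obtain ⟨hne, hv, hw, he1, _, halt⟩ := h
  have hne' : ∃ i, (fun i => v i - w i) i ≠ 0 := by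
    by_contra hc
    push_neg at hc
    exact hne (funext fun i => by have := hc i; omega)
  obtain ⟨s, hs1, hP⟩ := alt_partial k (fun i => v i - w i)
    (fun i => by rcases he1 i with h|h|h <;> simp [h]) halt hne'
  refine ⟨s, hs1, fun j => ?_, ?_⟩
  · have := hP (j : ℕ)
    rw [pnat_sub] at this
    rcases this with h | h
    · left; rw [psi_eq_pnat, psi_eq_pnat]; omega
    · right; rw [psi_eq_pnat, psi_eq_pnat]; omega
  · by_contra hc
    push_neg at hc
    exact hne (psi'_inj k q v w hv hw hc)

/-- total height function. -/
def tval (k : ℕ) (v : Fin k → ℤ) : ℤ := ∑ j : Fin (k-1), psi' k v j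

lemma tval_diff (k : ℕ) (v w : Fin k → ℤ) (s : ℤ)
    (hd : ∀ j : Fin (k-1), psi' k v j - psi' k w j = 0 ∨ psi' k v j - psi' k w j = s) :
    tval k v - tval k w =
      s * ((Finset.univ.filter fun j : Fin (k-1) => psi' k v j ≠ psi' k w j).card : ℤ) := by
  classical
  unfold tval
  rw [← Finset.sum_sub_distrib]
  rw [← Finset.sum_filter_add_sum_filter_not Finset.univ
    (fun j : Fin (k-1) => psi' k v j ≠ psi' k w j)]
  have h2 : ∑ j ∈ (Finset.univ.filter fun j : Fin (k-1) => ¬ psi' k v j ≠ psi' k w j),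
      (psi' k v j - psi' k w j) = 0 := by
    apply Finset.sum_eq_zero
    intro j hj
    simp only [Finset.mem_filter, not_not] at hj
    omega
  have h1 : ∑ j ∈ (Finset.univ.filter fun j : Fin (k-1) => psi' k v j ≠ psi' k w j),
      (psi' k v j - psi' k w j) =
      ∑ _j ∈ (Finset.univ.filter fun j : Fin (k-1) => psi' k v j ≠ psi' k w j), s := by
    apply Finset.sum_congr rfl
    intro j hj
    simp only [Finset.mem_filter] at hj
    rcases hd j with h | h
    · exact absurd (by omega) hj.2
    · exact h
  rw [h1, h2, Finset.sum_const]
  push_cast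
  ring
lemma cell_chain (k q : ℕ) (hk : 2 ≤ k) (S : Finset (Fin k → ℤ)) (hS : IsCell k q S) :
    ∃ (vv : ℕ → (Fin k → ℤ)) (cc : ℕ → Fin (k-1)),
      (∀ j, j < k → vv j ∈ S) ∧
      (∀ v ∈ S, ∃ j, j < k ∧ v = vv j) ∧
      (∀ j, j + 1 < k →
        psi' k (vv (j+1)) (cc j) = psi' k (vv j) (cc j) + 1 ∧
        ∀ i : Fin (k-1), i ≠ cc j → psi' k (vv (j+1)) i = psi' k (vv j) i) ∧
      (∀ i : Fin (k-1), ∃ j, j < k - 1 ∧ cc j = i ∧ ∀ j', j' < k - 1 → cc j' = i → j' = j) ∧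
      (∀ j, j ≤ k-1 → ∀ i : Fin (k-1),
        psi' k (vv j) i = psi' k (vv 0) i
          + (((Finset.range j).filter (fun j' => cc j' = i)).card : ℤ)) := by
  classical
  obtain ⟨hcard, hsimp, hadj⟩ := hS
  have hk1 : 0 < k - 1 := by omega
  have hcuniv : ((Finset.univ : Finset (Fin (k-1))).card : ℤ) = (k : ℤ) - 1 := by
    simp [Finset.card_univ]
    push_cast [Nat.cast_sub (by omega : 1 ≤ k)]
    ring
  -- t is injective on S with bounded pairwise differences
  have hpair : ∀ v ∈ S, ∀ w ∈ S, v ≠ w →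
      tval k v ≠ tval k w ∧ tval k v - tval k w ≤ (k : ℤ) - 1 := by
    intro v hv w hw hvw
    obtain ⟨s, hs1, hd, j0, hj0⟩ := adj_sign k q v w (hadj v hv w hw hvw)
    have htd := tval_diff k v w s hd
    set D := (Finset.univ.filter fun j : Fin (k-1) => psi' k v j ≠ psi' k w j) with hD
    have hDpos : 0 < (D.card : ℤ) := by
      have : j0 ∈ D := by simp [hD, hj0]
      exact_mod_cast Finset.card_pos.mpr ⟨j0, this⟩
    have hDle : (D.card : ℤ) ≤ (k : ℤ) - 1 := by
      rw [← hcuniv]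
      exact_mod_cast Finset.card_le_card (Finset.filter_subset _ _)
    constructor
    · rcases hs1 with rfl | rfl <;> intro hc <;> rw [hc] at htd <;> omega
    · rcases hs1 with rfl | rfl <;> omega
  have htinj : Set.InjOn (tval k) S := by
    intro v hv w hw hvw
    by_contra hc
    exact (hpair v hv w hw hc).1 hvw
  set T := S.image (tval k) with hT
  have hTcard : T.card = k := by rw [hT, Finset.card_image_of_injOn htinj, hcard]
  have hTne : T.Nonempty := by rw [← Finset.card_pos, hTcard]; omega
  set m := T.min' hTne with hm
  have hmem : m ∈ T := T.min'_mem hTne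
  obtain ⟨v0, hv0S, hv0⟩ := Finset.mem_image.mp hmem
  have hTsub : T ⊆ Finset.Icc m (m + (k : ℤ) - 1) := by
    intro x hx
    rw [Finset.mem_Icc]
    refine ⟨T.min'_le x hx, ?_⟩
    obtain ⟨v, hvS, rfl⟩ := Finset.mem_image.mp hx
    by_cases hvv0 : v = v0
    · rw [hvv0, hv0]; omega
    · have := (hpair v hvS v0 hv0S hvv0).2
      omega
  have hIcc : (Finset.Icc m (m + (k : ℤ) - 1)).card = k := by
    rw [Int.card_Icc]
    omega
  have hTIcc : T = Finset.Icc m (m + (k : ℤ) - 1) := by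
    apply Finset.eq_of_subset_of_card_le hTsub
    omega
  have hexists : ∀ j : ℕ, j < k → ∃ v, v ∈ S ∧ tval k v = m + j := by
    intro j hj
    have : m + (j : ℤ) ∈ T := by
      rw [hTIcc, Finset.mem_Icc]
      constructor
      · omega
      · have hjk : (j : ℤ) < (k : ℤ) := by exact_mod_cast hj
        omega
    obtain ⟨v, hvS, hv⟩ := Finset.mem_image.mp this
    exact ⟨v, hvS, hv⟩
  set vv : ℕ → (Fin k → ℤ) := fun j =>
    if h : ∃ v, v ∈ S ∧ tval k v = m + j then h.choose else fun _ => 0 with hvvdef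
  have hvv : ∀ j, j < k → vv j ∈ S ∧ tval k (vv j) = m + j := by
    intro j hj
    have h := hexists j hj
    rw [hvvdef]
    simp only [dif_pos h]
    exact h.choose_spec
  -- surjectivity
  have hsurj : ∀ v ∈ S, ∃ j, j < k ∧ v = vv j := by
    intro v hv
    have : tval k v ∈ T := Finset.mem_image_of_mem _ hv
    rw [hTIcc, Finset.mem_Icc] at this
    set j := (tval k v - m).toNat with hj
    have hjk : j < k := by omega
    have hjval : (j : ℤ) = tval k v - m := by omega
    refine ⟨j, hjk, ?_⟩
    have h2 := hvv j hjk
    by_contra hc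
    exact (hpair v hv (vv j) h2.1 hc).1 (by omega)
  -- step structure
  have hstep : ∀ j, j + 1 < k → ∃ i : Fin (k-1),
      psi' k (vv (j+1)) i = psi' k (vv j) i + 1 ∧
      ∀ i' : Fin (k-1), i' ≠ i → psi' k (vv (j+1)) i' = psi' k (vv j) i' := by
    intro j hj
    have ha := hvv j (by omega)
    have hb := hvv (j+1) hj
    have hne : vv (j+1) ≠ vv j := by
      intro hc
      have := hb.2
      rw [hc, ha.2] at this
      omega
    obtain ⟨s, hs1, hd, j0, hj0⟩ := adj_sign k q (vv (j+1)) (vv j) (hadj _ hb.1 _ ha.1 hne)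
    have htd := tval_diff k (vv (j+1)) (vv j) s hd
    set D := (Finset.univ.filter fun i : Fin (k-1) =>
      psi' k (vv (j+1)) i ≠ psi' k (vv j) i) with hD
    have htd1 : tval k (vv (j+1)) - tval k (vv j) = 1 := by
      rw [hb.2, ha.2]; push_cast; ring
    have hDpos : 0 < (D.card : ℤ) := by
      have : j0 ∈ D := by simp [hD, hj0]
      exact_mod_cast Finset.card_pos.mpr ⟨j0, this⟩
    have hs : s = 1 := by rcases hs1 with rfl | rfl; rfl; omega
    have hDone : D.card = 1 := by
      rw [hs] at htd; omega
    obtain ⟨i0, hi0⟩ := Finset.card_eq_one.mp hDone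
    refine ⟨i0, ?_, ?_⟩
    · have hi0D : i0 ∈ D := by rw [hi0]; simp
      rw [hD] at hi0D
      simp only [Finset.mem_filter] at hi0D
      rcases hd i0 with h | h
      · exact absurd (by omega) hi0D.2
      · rw [hs] at h; omega
    · intro i' hi'
      have : i' ∉ D := by rw [hi0]; simpa using hi'
      rw [hD] at this
      simp only [Finset.mem_filter, Finset.mem_univ, true_and, not_not] at this
      exact this
  set cc : ℕ → Fin (k-1) := fun j =>
    if h : j + 1 < k then (hstep j h).choose else ⟨0, hk1⟩ with hccdef
  have hcc : ∀ j, j + 1 < k →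
      psi' k (vv (j+1)) (cc j) = psi' k (vv j) (cc j) + 1 ∧
      ∀ i' : Fin (k-1), i' ≠ cc j → psi' k (vv (j+1)) i' = psi' k (vv j) i' := by
    intro j hj
    rw [hccdef]
    simp only [dif_pos hj]
    exact (hstep j hj).choose_spec
  -- telescoping
  have htel : ∀ j, j ≤ k - 1 → ∀ i : Fin (k-1),
      psi' k (vv j) i = psi' k (vv 0) i
        + (((Finset.range j).filter (fun j' => cc j' = i)).card : ℤ) := by
    intro j
    induction j with
    | zero => intro _ i; simp
    | succ j ih =>
      intro hj i
      have hj' : j + 1 < k := by omega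
      have hstepj := hcc j hj'
      have hr : (Finset.range (j+1)).filter (fun j' => cc j' = i)
          = if cc j = i then insert j ((Finset.range j).filter (fun j' => cc j' = i))
            else (Finset.range j).filter (fun j' => cc j' = i) := by
        rw [Finset.range_add_one, Finset.filter_insert]
      by_cases hcj : cc j = i
      · have hpsi : psi' k (vv (j+1)) i = psi' k (vv j) i + 1 := by
          rw [← hcj]; exact hstepj.1
        rw [hpsi, ih (by omega) i, hr, if_pos hcj,
          Finset.card_insert_of_notMem (by simp)]
        push_cast
        ring
      · rw [hstepj.2 i (fun hc => hcj hc.symm)]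
        rw [ih (by omega) i, hr, if_neg hcj]
  -- top minus bottom is all-ones; unique coverage
  have hcover : ∀ i : Fin (k-1), ∃ j, j < k - 1 ∧ cc j = i ∧
      ∀ j', j' < k - 1 → cc j' = i → j' = j := by
    have h0 := hvv 0 (by omega)
    have htop := hvv (k-1) (by omega)
    have hne : vv (k-1) ≠ vv 0 := by
      intro hc
      have := htop.2
      rw [hc, h0.2] at this
      simp at this
      omega
    obtain ⟨s, hs1, hd, j0, hj0⟩ := adj_sign k q (vv (k-1)) (vv 0) (hadj _ htop.1 _ h0.1 hne)
    have htd := tval_diff k (vv (k-1)) (vv 0) s hd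
    set D := (Finset.univ.filter fun i : Fin (k-1) =>
      psi' k (vv (k-1)) i ≠ psi' k (vv 0) i) with hD
    have htd1 : tval k (vv (k-1)) - tval k (vv 0) = (k : ℤ) - 1 := by
      rw [htop.2, h0.2]
      push_cast [Nat.cast_sub (by omega : 1 ≤ k)]
      ring
    have hDle : (D.card : ℤ) ≤ (k : ℤ) - 1 := by
      rw [← hcuniv]
      exact_mod_cast Finset.card_le_card (Finset.filter_subset _ _)
    have hs : s = 1 := by
      rcases hs1 with rfl | rfl
      · rfl
      · exfalso
        have hDpos : 0 < (D.card : ℤ) := by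
          have : j0 ∈ D := by simp [hD, hj0]
          exact_mod_cast Finset.card_pos.mpr ⟨j0, this⟩
        omega
    rw [hs, one_mul] at htd
    have hDuniv : D = Finset.univ := by
      apply Finset.eq_of_subset_of_card_le (Finset.subset_univ _)
      omega
    have hall1 : ∀ i : Fin (k-1), psi' k (vv (k-1)) i = psi' k (vv 0) i + 1 := by
      intro i
      have hiD : i ∈ D := by rw [hDuniv]; simp
      rw [hD] at hiD
      simp only [Finset.mem_filter] at hiD
      rcases hd i with h | h
      · exact absurd (by omega) hiD.2
      · rw [hs] at h; omega
    intro i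
    have h1 := htel (k-1) le_rfl i
    rw [hall1 i] at h1
    have hc1 : ((Finset.range (k-1)).filter (fun j' => cc j' = i)).card = 1 := by omega
    obtain ⟨j1, hj1⟩ := Finset.card_eq_one.mp hc1
    have hj1mem : j1 ∈ (Finset.range (k-1)).filter (fun j' => cc j' = i) := by rw [hj1]; simp
    simp only [Finset.mem_filter, Finset.mem_range] at hj1mem
    refine ⟨j1, hj1mem.1, hj1mem.2, ?_⟩
    intro j' hj' hccj'
    have : j' ∈ (Finset.range (k-1)).filter (fun j' => cc j' = i) := by
      simp only [Finset.mem_filter, Finset.mem_range]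
      exact ⟨hj', hccj'⟩
    rw [hj1] at this
    simpa using this
  exact ⟨vv, cc, fun j hj => (hvv j hj).1, hsurj, hcc, hcover, htel⟩
/-- monotone tuples taking the same values (up to bijections) are equal -/
lemma sorted_unique {n : ℕ} (f g : Fin n → ℤ)
    (hf : ∀ i j : Fin n, i ≤ j → f i ≤ f j) (hg : ∀ i j : Fin n, i ≤ j → g i ≤ g j)
    (σ τ : Fin n → Fin n) (hσ : Function.Bijective σ) (hτ : Function.Bijective τ)
    (h : ∀ j, f (σ j) = g (τ j)) : f = g := by
  classical
  set e := Equiv.ofBijective σ hσ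
  set e' := Equiv.ofBijective τ hτ
  set φ : Fin n ≃ Fin n := e.symm.trans e'
  have hφ : ∀ i, g (φ i) = f i := by
    intro i
    have : f (σ (e.symm i)) = g (τ (e.symm i)) := h _
    have hσe : σ (e.symm i) = i := e.apply_symm_apply i
    rw [hσe] at this
    rw [this]
    show g (e' (e.symm i)) = _
    simp only [e', Equiv.ofBijective_apply]
  have hcards : ∀ x : ℤ, (Finset.univ.filter (fun i => f i ≤ x)).card
      = (Finset.univ.filter (fun i => g i ≤ x)).card := by
    intro x
    have himg : (Finset.univ.filter (fun i => f i ≤ x)).image φ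
        = Finset.univ.filter (fun i => g i ≤ x) := by
      ext b
      simp only [Finset.mem_image, Finset.mem_filter, Finset.mem_univ, true_and]
      constructor
      · rintro ⟨a, ha, rfl⟩
        rw [hφ a]; exact ha
      · intro hb
        refine ⟨φ.symm b, ?_, φ.apply_symm_apply b⟩
        rw [← hφ (φ.symm b), φ.apply_symm_apply]
        exact hb
    rw [← himg, Finset.card_image_of_injective _ φ.injective]
  have hchar : ∀ (F : Fin n → ℤ), (∀ i j : Fin n, i ≤ j → F i ≤ F j) → ∀ (i : Fin n) (x : ℤ),
      (F i ≤ x ↔ (i : ℕ) < (Finset.univ.filter (fun i => F i ≤ x)).card) := by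
    intro F hF i x
    constructor
    · intro hi
      have hsub : Finset.Iic i ⊆ Finset.univ.filter (fun j => F j ≤ x) := by
        intro j hj
        simp only [Finset.mem_Iic] at hj
        simp only [Finset.mem_filter, Finset.mem_univ, true_and]
        exact le_trans (hF j i hj) hi
      have := Finset.card_le_card hsub
      rw [Fin.card_Iic] at this
      omega
    · intro hi
      by_contra hc
      have hsub : Finset.univ.filter (fun j => F j ≤ x) ⊆ Finset.Iio i := by
        intro j hj
        simp only [Finset.mem_filter, Finset.mem_univ, true_and] at hj
        simp only [Finset.mem_Iio]
        by_contra hji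
        exact hc (le_trans (hF i j (not_lt.mp hji)) hj)
      have := Finset.card_le_card hsub
      rw [Fin.card_Iio] at this
      omega
  funext i
  have h1 : f i ≤ g i := by
    rw [hchar f hf i (g i), hcards]
    rw [← hchar g hg i (g i)]
  have h2 : g i ≤ f i := by
    rw [hchar g hg i (f i), ← hcards]
    rw [← hchar f hf i (f i)]
  omega
lemma psi'_mono (k q : ℕ) (v : Fin k → ℤ) (hv : inSimplex k q v)
    {i i' : Fin (k-1)} (h : i ≤ i') : psi' k v i ≤ psi' k v i' := by
  rw [psi_eq_pnat, psi_eq_pnat]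
  exact pnat_mono k v hv.1 h

def ChainOf (k q : ℕ) (S : Finset (Fin k → ℤ)) (vv : ℕ → Fin k → ℤ)
    (cc : ℕ → Fin (k-1)) : Prop :=
  (∀ j, j < k → vv j ∈ S) ∧
  (∀ v ∈ S, ∃ j, j < k ∧ v = vv j) ∧
  (∀ j, j + 1 < k → psi' k (vv (j+1)) (cc j) = psi' k (vv j) (cc j) + 1 ∧
    ∀ i : Fin (k-1), i ≠ cc j → psi' k (vv (j+1)) i = psi' k (vv j) i) ∧
  (∀ i : Fin (k-1), ∃ j, j < k - 1 ∧ cc j = i ∧ ∀ j', j' < k - 1 → cc j' = i → j' = j) ∧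
  (∀ j, j ≤ k-1 → ∀ i : Fin (k-1), psi' k (vv j) i = psi' k (vv 0) i
    + (((Finset.range j).filter (fun j' => cc j' = i)).card : ℤ))

def Encodes (k q : ℕ) (S : Finset (Fin k → ℤ)) (u : Fin (k-1) → ℤ) : Prop :=
  ∃ vv : ℕ → (Fin k → ℤ), ∃ cc : ℕ → Fin (k-1),
    ChainOf k q S vv cc ∧ ∀ j : Fin (k-1), u j = psi' k (vv (j:ℕ)) (cc (j:ℕ))

lemma cell_encodes (k q : ℕ) (hk : 2 ≤ k) (S : Finset (Fin k → ℤ)) (hS : IsCell k q S) :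
    ∃ u : Fin (k-1) → ℤ, Encodes k q S u := by
  obtain ⟨vv, cc, h1, h2, h3, h4, h5⟩ := cell_chain k q hk S hS
  exact ⟨fun j => psi' k (vv (j:ℕ)) (cc (j:ℕ)), vv, cc, ⟨h1, h2, h3, h4, h5⟩, fun _ => rfl⟩

/-- value before each increment equals base value at that coordinate -/
lemma chain_base (k q : ℕ) (S : Finset (Fin k → ℤ)) (vv : ℕ → Fin k → ℤ)
    (cc : ℕ → Fin (k-1)) (hch : ChainOf k q S vv cc) {jn : ℕ} (hjn : jn < k - 1) :
    psi' k (vv jn) (cc jn) = psi' k (vv 0) (cc jn) := by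
  obtain ⟨hmem, hsurj, hstep, hcover, htel⟩ := hch
  have h := htel jn (by omega) (cc jn)
  have hempty : (Finset.range jn).filter (fun j' => cc j' = cc jn) = ∅ := by
    rw [Finset.filter_eq_empty_iff]
    intro j' hj'
    simp only [Finset.mem_range] at hj'
    intro hcj'
    obtain ⟨jstar, hjs1, hjs2, hjs3⟩ := hcover (cc jn)
    have e1 := hjs3 jn hjn rfl
    have e2 := hjs3 j' (by omega) hcj'
    omega
  rw [hempty] at h
  simpa using h

/-- the incremented coordinate is the largest one achieving the base value -/
lemma chain_max (k q : ℕ) (S : Finset (Fin k → ℤ)) (hS : IsCell k q S)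
    (vv : ℕ → Fin k → ℤ) (cc : ℕ → Fin (k-1)) (hch : ChainOf k q S vv cc)
    {jn : ℕ} (hjn : jn < k - 1) {i : Fin (k-1)} (hi : cc jn < i) :
    psi' k (vv jn) (cc jn) + 1 ≤ psi' k (vv jn) i := by
  obtain ⟨hmem, hsurj, hstep, hcover, htel⟩ := hch
  have hj1 : jn + 1 < k := by omega
  have hs := hstep jn hj1
  have h1 : psi' k (vv jn) i = psi' k (vv (jn+1)) i := (hs.2 i (ne_of_gt hi)).symm
  have h2 : psi' k (vv (jn+1)) (cc jn) ≤ psi' k (vv (jn+1)) i :=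
    psi'_mono k q _ (hS.2.1 _ (hmem (jn+1) hj1)) (le_of_lt hi)
  rw [h1, ← hs.1] at *
  omega

lemma encodes_inj (k q : ℕ) (hk : 2 ≤ k) (S S' : Finset (Fin k → ℤ))
    (hS : IsCell k q S) (hS' : IsCell k q S') (u : Fin (k-1) → ℤ)
    (h : Encodes k q S u) (h' : Encodes k q S' u) : S = S' := by
  obtain ⟨vv, cc, hch, hu⟩ := h
  obtain ⟨vv', cc', hch', hu'⟩ := h'
  have hbij : ∀ (dd : ℕ → Fin (k-1)),
      (∀ i : Fin (k-1), ∃ j, j < k - 1 ∧ dd j = i ∧ ∀ j', j' < k - 1 → dd j' = i → j' = j) →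
      Function.Bijective (fun j : Fin (k-1) => dd (j : ℕ)) := by
    intro dd hcover
    constructor
    · intro a b hab
      obtain ⟨jstar, hjs1, hjs2, hjs3⟩ := hcover (dd (a : ℕ))
      have e1 := hjs3 (a : ℕ) a.isLt rfl
      have hab' : dd (a:ℕ) = dd (b:ℕ) := hab
      have e2 := hjs3 (b : ℕ) b.isLt hab'.symm
      exact Fin.ext (by omega)
    · intro i
      obtain ⟨jstar, hjs1, hjs2, _⟩ := hcover i
      exact ⟨⟨jstar, hjs1⟩, hjs2⟩
  have hw : (fun i => psi' k (vv 0) i) = (fun i => psi' k (vv' 0) i) := by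
    apply sorted_unique _ _ ?_ ?_ _ _ (hbij cc hch.2.2.2.1) (hbij cc' hch'.2.2.2.1)
    · intro j
      have e1 : u j = psi' k (vv (j:ℕ)) (cc (j:ℕ)) := hu j
      have e2 : u j = psi' k (vv' (j:ℕ)) (cc' (j:ℕ)) := hu' j
      rw [chain_base k q S vv cc hch j.isLt] at e1
      rw [chain_base k q S' vv' cc' hch' j.isLt] at e2
      show psi' k (vv 0) (cc (j:ℕ)) = psi' k (vv' 0) (cc' (j:ℕ))
      rw [← e1, ← e2]
    · intro i i' hii'
      exact psi'_mono k q _ (hS.2.1 _ (hch.1 0 (by omega))) hii'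
    · intro i i' hii'
      exact psi'_mono k q _ (hS'.2.1 _ (hch'.1 0 (by omega))) hii'
  -- chains coincide level by level
  have hlev : ∀ jn, jn < k → ∀ i : Fin (k-1), psi' k (vv jn) i = psi' k (vv' jn) i := by
    intro jn
    induction jn with
    | zero => intro _ i; exact congrFun hw i
    | succ jn ih =>
      intro hjn1 i
      have hjn : jn < k - 1 := by omega
      have ihh := ih (by omega)
      have hjF : ((⟨jn, hjn⟩ : Fin (k-1)) : ℕ) = jn := rfl
      have e1 : psi' k (vv jn) (cc jn) = u ⟨jn, hjn⟩ := by rw [hu ⟨jn, hjn⟩]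
      have e2 : psi' k (vv' jn) (cc' jn) = u ⟨jn, hjn⟩ := by rw [hu' ⟨jn, hjn⟩]
      have hcceq : cc jn = cc' jn := by
        by_contra hne
        rcases lt_or_gt_of_ne hne with hlt | hgt
        · have := chain_max k q S hS vv cc hch hjn hlt
          rw [ihh (cc' jn), e2, ← e1] at this
          have h2 := ihh (cc jn)
          omega
        · have := chain_max k q S' hS' vv' cc' hch' hjn hgt
          rw [← ihh (cc jn), e1, ← e2] at this
          omega
      have hstep1 := hch.2.2.1 jn (by omega)
      have hstep2 := hch'.2.2.1 jn (by omega)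
      by_cases hi : i = cc jn
      · rw [hi, hstep1.1]
        rw [hcceq] at hi ⊢
        rw [hstep2.1, ← hcceq, e1, hcceq, e2]
      · rw [hstep1.2 i hi, hstep2.2 i (by rw [← hcceq]; exact hi)]
        exact ihh i
  -- conclude S = S'
  apply Finset.eq_of_subset_of_card_le
  · intro v hv
    obtain ⟨jn, hjn, rfl⟩ := hch.2.1 v hv
    have : vv jn = vv' jn := by
      apply psi'_inj k q _ _ (hS.2.1 _ (hch.1 jn hjn)) (hS'.2.1 _ (hch'.1 jn hjn))
      intro i
      exact hlev jn hjn i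
    rw [this]
    exact hch'.1 jn hjn
  · rw [hS.1, hS'.1]
lemma exists_label (k : ℕ) (hk : 2 ≤ k) :
    ∃ c : (Fin k → ℤ) → Fin k, ∀ v : Fin k → ℤ,
      (∃ i, v i ≠ 0) → v (c v) ≠ 0 ∧ ∀ i, v i ≠ 0 → c v ≤ i := by
  classical
  refine ⟨fun v => if h : (Finset.univ.filter (fun i => v i ≠ 0)).Nonempty
    then Finset.min' _ h else ⟨0, by omega⟩, ?_⟩
  intro v hv
  have hne : (Finset.univ.filter (fun i => v i ≠ 0)).Nonempty := by
    obtain ⟨i, hi⟩ := hv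
    exact ⟨i, by simp [hi]⟩
  simp only [dif_pos hne]
  constructor
  · have := Finset.min'_mem _ hne
    simpa using this
  · intro i hi
    exact Finset.min'_le _ i (by simp [hi])

lemma simplex_exists_ne (k q : ℕ) (hq : 1 ≤ q) (v : Fin k → ℤ) (hv : inSimplex k q v) :
    ∃ i, v i ≠ 0 := by
  by_contra hall
  push_neg at hall
  have : ∑ i, v i = 0 := Finset.sum_eq_zero (fun i _ => hall i)
  rw [hv.2] at this
  have : q = 0 := by exact_mod_cast this
  omega

lemma encodes_props (k q : ℕ) (hk : 2 ≤ k) (hq : 1 ≤ q) (c : (Fin k → ℤ) → Fin k)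
    (hc : ∀ v : Fin k → ℤ, (∃ i, v i ≠ 0) → v (c v) ≠ 0 ∧ ∀ i, v i ≠ 0 → c v ≤ i)
    (S : Finset (Fin k → ℤ)) (hS : IsCell k q S) (hN : NonMono c S)
    (u : Fin (k-1) → ℤ) (hu : Encodes k q S u) :
    (∀ j, 0 ≤ u j ∧ u j ≤ (q:ℤ) - 1) ∧ ∃ j, u j = 0 := by
  obtain ⟨vv, cc, hch, huv⟩ := hu
  have hmem := hch.1
  have hsurj := hch.2.1
  have hstep := hch.2.2.1
  have hcover := hch.2.2.2.1
  have htel := hch.2.2.2.2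
  constructor
  · intro j
    have hjk : (j : ℕ) + 1 < k := by have := j.isLt; omega
    have h1 := huv j
    constructor
    · rw [h1, psi_eq_pnat]
      exact pnat_nonneg k _ (hS.2.1 _ (hmem (j:ℕ) (by omega))).1 _
    · have h2 := (hstep (j:ℕ) hjk).1
      have h3 : psi' k (vv ((j:ℕ)+1)) (cc (j:ℕ)) ≤ (q : ℤ) := by
        rw [psi_eq_pnat]
        exact pnat_le_q k q _ (hS.2.1 _ (hmem ((j:ℕ)+1) hjk)) _
      omega
  · -- some vertex has first coordinate 0
    have i0 : Fin k := ⟨0, by omega⟩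
    have hzero : ∃ x ∈ S, x ⟨0, by omega⟩ = 0 := by
      by_contra hall
      push_neg at hall
      have hcx : ∀ x ∈ S, c x = ⟨0, by omega⟩ := by
        intro x hx
        have hnei := simplex_exists_ne k q hq x (hS.2.1 x hx)
        have := (hc x hnei).2 ⟨0, by omega⟩ (hall x hx)
        exact le_antisymm this (Fin.mk_le_of_le_val (Nat.zero_le _))
      obtain ⟨a, ha, b, hb, hab⟩ := hN
      rw [hcx a ha, hcx b hb] at hab
      exact hab rfl
    obtain ⟨x, hxS, hx0⟩ := hzero
    have j0 : Fin (k-1) := ⟨0, by omega⟩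
    have hpsix : psi' k x ⟨0, by omega⟩ = 0 := by
      rw [psi_eq_pnat]
      have := pnat_zero k x (by omega : 0 < k)
      simp only [Fin.val_mk] at this ⊢
      rw [this]
      exact hx0
    obtain ⟨jn, hjn, rfl⟩ := hsurj x hxS
    have hbase0 : psi' k (vv 0) ⟨0, by omega⟩ = 0 := by
      have h1 := htel jn (by omega) ⟨0, by omega⟩
      have h2 : 0 ≤ psi' k (vv 0) (⟨0, by omega⟩ : Fin (k-1)) := by
        rw [psi_eq_pnat]
        exact pnat_nonneg k _ (hS.2.1 _ (hmem 0 (by omega))).1 _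
      have h3 : (0:ℤ) ≤ (((Finset.range jn).filter (fun j' => cc j' = ⟨0, by omega⟩)).card : ℤ) :=
        Int.natCast_nonneg _
      omega
    obtain ⟨jstar, hjs1, hjs2, _⟩ := hcover ⟨0, by omega⟩
    refine ⟨⟨jstar, hjs1⟩, ?_⟩
    have := huv ⟨jstar, hjs1⟩
    rw [this]
    have hb := chain_base k q S vv cc hch (jn := jstar) hjs1
    simp only [Fin.val_mk]
    rw [hb, hjs2]
    exact hbase0

lemma count_target (n q : ℕ) (hq : 1 ≤ q) :
    ((Fintype.piFinset (fun _ : Fin n => Finset.Icc (0:ℤ) ((q:ℤ)-1))).filter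
      (fun u => ∃ j, u j = 0)).card = q ^ n - (q-1) ^ n := by
  classical
  set T1 := Fintype.piFinset (fun _ : Fin n => Finset.Icc (0:ℤ) ((q:ℤ)-1)) with hT1
  have htot : T1.card = q ^ n := by
    rw [hT1, Fintype.card_piFinset]
    have : (Finset.Icc (0:ℤ) ((q:ℤ)-1)).card = q := by
      rw [Int.card_Icc]
      omega
    simp [this]
  have hcompl : T1.filter (fun u => ¬ ∃ j, u j = 0)
      = Fintype.piFinset (fun _ : Fin n => Finset.Icc (1:ℤ) ((q:ℤ)-1)) := by
    ext u
    simp only [hT1, Finset.mem_filter, Fintype.mem_piFinset, Finset.mem_Icc, not_exists]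
    constructor
    · rintro ⟨h1, h2⟩ j
      have := h1 j
      have := h2 j
      omega
    · intro h
      refine ⟨fun j => by have := h j; omega, fun j => by have := h j; omega⟩
  have hcomplcard : (T1.filter (fun u => ¬ ∃ j, u j = 0)).card = (q-1) ^ n := by
    rw [hcompl, Fintype.card_piFinset]
    have : (Finset.Icc (1:ℤ) ((q:ℤ)-1)).card = q - 1 := by
      rw [Int.card_Icc]
      omega
    simp [this]
  have hnot : T1.filter (fun u => ¬ ∃ j, u j = 0) = T1 \ T1.filter (fun u => ∃ j, u j = 0) :=
    Finset.filter_not _ _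
  have hsdiff : (T1 \ T1.filter (fun u => ∃ j, u j = 0)).card
      = T1.card - (T1.filter (fun u => ∃ j, u j = 0)).card :=
    Finset.card_sdiff_of_subset (Finset.filter_subset _ _)
  have hfle : (T1.filter (fun u => ∃ j, u j = 0)).card ≤ T1.card :=
    Finset.card_le_card (Finset.filter_subset _ _)
  rw [hnot, hsdiff] at hcomplcard
  calc (T1.filter (fun u => ∃ j, u j = 0)).card
      = T1.card - (T1.card - (T1.filter (fun u => ∃ j, u j = 0)).card) :=
        (Nat.sub_sub_self hfle).symm
    _ = q ^ n - (q-1) ^ n := by rw [hcomplcard, htot]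

/-- There exists a Sperner labeling `c` of `Δ_{k,q} ∩ ℤ^k` with at most
`q^(k-1) - (q-1)^(k-1)` non-monochromatic cells of the regular triangulation. -/
theorem upper_bound_nonmono (k q : ℕ) (hk : 2 ≤ k) (hq : 1 ≤ q) :
    ∃ c : (Fin k → ℤ) → Fin k, IsSperner k q c ∧
      {S : Finset (Fin k → ℤ) | IsCell k q S ∧ NonMono c S}.ncard ≤
        q ^ (k - 1) - (q - 1) ^ (k - 1) := by
  classical
  obtain ⟨c, hc⟩ := exists_label k hk
  refine ⟨c, ?_, ?_⟩
  · intro v hv i hvi hcv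
    have h := (hc v (simplex_exists_ne k q hq v hv)).1
    rw [hcv] at h
    exact h hvi
  · set Target := (Fintype.piFinset (fun _ : Fin (k-1) => Finset.Icc (0:ℤ) ((q:ℤ)-1))).filter
      (fun u => ∃ j, u j = 0) with hTarget
    set f : Finset (Fin k → ℤ) → (Fin (k-1) → ℤ) := fun S =>
      if h : IsCell k q S then (cell_encodes k q hk S h).choose else 0 with hf
    have hfE : ∀ S : Finset (Fin k → ℤ), IsCell k q S → Encodes k q S (f S) := by
      intro S h
      rw [hf]
      simp only [dif_pos h]
      exact (cell_encodes k q hk S h).choose_spec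
    have h1 : {S : Finset (Fin k → ℤ) | IsCell k q S ∧ NonMono c S}.ncard
        ≤ (↑Target : Set (Fin (k-1) → ℤ)).ncard := by
      apply Set.ncard_le_ncard_of_injOn f
      · rintro S ⟨hcell, hnm⟩
        obtain ⟨hbound, hzero⟩ := encodes_props k q hk hq c hc S hcell hnm (f S) (hfE S hcell)
        simp only [hTarget, Finset.coe_filter, Set.mem_setOf_eq, Fintype.mem_piFinset,
          Finset.mem_Icc]
        exact ⟨fun j => hbound j, hzero⟩
      · rintro S ⟨hcS, _⟩ S' ⟨hcS', _⟩ heq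
        exact encodes_inj k q hk S S' hcS hcS' (f S) (hfE S hcS) (heq ▸ hfE S' hcS')
    rw [Set.ncard_coe_finset, hTarget, count_target (k-1) q hq] at h1
    exact h1
end

section
/- Let k ≥ 2 and q ≥ 1 be integers. Under the first-choice labeling c, a cell S of the regular triangulation 𝒯 of Δ_{k,q} is non-monochromatic if and only if S contains a vertex whose first coordinate equals 0. -/
open Finset

/-!
Write `P_j(x) = x_0 + ⋯ + x_{j-1}` for the prefix sums of `x`. If `u ≠ w` are adjacent, the
nonzero entries of `u - w` are `±1` with alternating signs, so the sum of `u - w` over any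
interval of indices lies in `{-1, 0, 1}`; consequently the prefix sums `P_j(u - w)` all lie in
`{0, s}` for a single sign `s`. They vanish for `j ≥ k`, and also for `j ≤ 1` when `u_0 = w_0`,
so the weight `∑_{j=2}^{k-1} P_j` of `u` and `w` differs by at least `1` and at most `k - 2`.
Hence the `k` vertices of a cell cannot all have first coordinate `0`; and the first-choice
label is `0` exactly when the first coordinate is positive.
-/

section Alternating

variable {e : ℕ → ℤ}

def IsAlternating (e : ℕ → ℤ) : Prop :=
  ∀ i j, i < j → e i ≠ 0 → e j ≠ 0 → (∀ l, i < l → l < j → e l = 0) → e i = -e j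

theorem IsAlternating.sum_Ico_eq_zero_or_eq_last (ha : IsAlternating e) {a b : ℕ} (hab : a ≤ b) :
    ∑ i ∈ Ico a b, e i = 0 ∨
      ∃ m ∈ Ico a b, e m ≠ 0 ∧ (∀ l, m < l → l < b → e l = 0) ∧ ∑ i ∈ Ico a b, e i = e m := by
  induction b, hab using Nat.le_induction with
  | base => simp
  | succ b hab ih =>
    rw [sum_Ico_succ_top hab]
    by_cases hb : e b = 0
    · rw [hb, add_zero]
      refine ih.imp_right fun ⟨m, hm, hm0, hlast, hsum⟩ => ⟨m, ?_, hm0, fun l hml hlb => ?_, hsum⟩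
      · simp only [mem_Ico] at hm ⊢
        omega
      · rcases Nat.lt_succ_iff_lt_or_eq.mp hlb with hlb | rfl
        exacts [hlast l hml hlb, hb]
    · rcases ih with hsum | ⟨m, hm, hm0, hlast, hsum⟩
      · exact .inr ⟨b, by simp [hab], hb, fun l hbl hlb => by omega, by rw [hsum, zero_add]⟩
      · left
        rw [hsum, ha m b (mem_Ico.mp hm).2 hm0 hb hlast, neg_add_cancel]

theorem IsAlternating.abs_sum_Ico_le_one (hr : ∀ i, |e i| ≤ 1) (ha : IsAlternating e) (a b : ℕ) :
    |∑ i ∈ Ico a b, e i| ≤ 1 := by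
  rcases le_or_gt a b with hab | hba
  · rcases ha.sum_Ico_eq_zero_or_eq_last hab with hsum | ⟨m, -, -, -, hsum⟩
    · simp [hsum]
    · exact hsum ▸ hr m
  · simp [Ico_eq_empty_of_le hba.le]

theorem IsAlternating.abs_sum_range_le_one (hr : ∀ i, |e i| ≤ 1) (ha : IsAlternating e) (n : ℕ) :
    |∑ i ∈ range n, e i| ≤ 1 :=
  range_eq_Ico n ▸ ha.abs_sum_Ico_le_one hr 0 n

theorem IsAlternating.sum_range_eq_of_ne_zero (hr : ∀ i, |e i| ≤ 1) (ha : IsAlternating e)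
    {a b : ℕ} (hab : a ≤ b) (ha0 : ∑ i ∈ range a, e i ≠ 0) (hb0 : ∑ i ∈ range b, e i ≠ 0) :
    ∑ i ∈ range a, e i = ∑ i ∈ range b, e i := by
  have hsplit := sum_range_add_sum_Ico e hab
  have h₁ := abs_le.mp (ha.abs_sum_range_le_one hr a)
  have h₂ := abs_le.mp (ha.abs_sum_range_le_one hr b)
  have h₃ := abs_le.mp (ha.abs_sum_Ico_le_one hr a b)
  omega

end Alternating

theorem abs_sum_eq_card_filter_ne_zero {ι : Type*} (T : Finset ι) (f : ι → ℤ)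
    (hf : ∀ j ∈ T, |f j| ≤ 1) (hsame : ∀ i ∈ T, ∀ j ∈ T, f i ≠ 0 → f j ≠ 0 → f i = f j) :
    |∑ j ∈ T, f j| = #{j ∈ T | f j ≠ 0} := by
  rw [← sum_filter_ne_zero]
  by_cases hne : ∃ j ∈ T, f j ≠ 0
  · obtain ⟨j, hj, hj0⟩ := hne
    have hconst : ∀ i ∈ T.filter (f · ≠ 0), f i = f j := fun i hi =>
      hsame i (mem_filter.mp hi).1 j hj (mem_filter.mp hi).2 hj0
    have hunit : |f j| = 1 := le_antisymm (hf j hj) (Int.one_le_abs hj0)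
    rw [sum_congr rfl hconst, sum_const, nsmul_eq_mul, abs_mul, hunit, mul_one, Nat.abs_cast]
  · push Not at hne
    rw [filter_false_of_mem fun j hj => not_not.mpr (hne j hj)]
    simp

theorem card_le_of_abs_sub_le {T : Finset ℤ} {n : ℕ} (h : ∀ x ∈ T, ∀ y ∈ T, |x - y| ≤ n) :
    #T ≤ n + 1 := by
  rcases T.eq_empty_or_nonempty with rfl | hT
  · simp
  have hsub : T ⊆ Icc (T.min' hT) (T.min' hT + n) := fun x hx =>
    mem_Icc.mpr ⟨T.min'_le x hx, by linarith [(abs_le.mp (h x hx _ (T.min'_mem hT))).2]⟩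
  have := card_le_card hsub
  rw [Int.card_Icc] at this
  omega

section PrefixSums

variable {k : ℕ}

def zeroExtend (x : Fin k → ℤ) (n : ℕ) : ℤ :=
  if h : n < k then x ⟨n, h⟩ else 0

def prefixSum (x : Fin k → ℤ) (n : ℕ) : ℤ :=
  ∑ i ∈ range n, zeroExtend x i

def prefixWeight (x : Fin k → ℤ) : ℤ :=
  ∑ j ∈ Icc 2 (k - 1), prefixSum x j

theorem zeroExtend_val (x : Fin k → ℤ) (i : Fin k) : zeroExtend x i = x i := by
  simp [zeroExtend]

theorem zeroExtend_of_le (x : Fin k → ℤ) {n : ℕ} (hn : k ≤ n) : zeroExtend x n = 0 := by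
  simp [zeroExtend, hn.not_gt]

theorem zeroExtend_sub (x y : Fin k → ℤ) : zeroExtend (x - y) = zeroExtend x - zeroExtend y := by
  funext n
  by_cases h : n < k <;> simp [zeroExtend, h]

theorem isAlternating_zeroExtend {d : Fin k → ℤ} (hd : AltSign d) :
    IsAlternating (zeroExtend d) := by
  intro i j hij hi hj hbetween
  have hjk : j < k := by_contra fun h => hj (zeroExtend_of_le d (not_lt.mp h))
  have hik : i < k := hij.trans hjk
  simp only [zeroExtend, hik, hjk, dite_true] at hi hj ⊢
  refine hd ⟨i, hik⟩ ⟨j, hjk⟩ hij hi hj fun l hil hlj => ?_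
  simpa [zeroExtend_val] using hbetween l hil hlj

theorem prefixSum_succ (x : Fin k → ℤ) (i : Fin k) :
    prefixSum x (i + 1) = prefixSum x i + x i := by
  rw [prefixSum, sum_range_succ, zeroExtend_val, prefixSum]

theorem prefixSum_one (x : Fin k → ℤ) (hk : 0 < k) : prefixSum x 1 = x ⟨0, hk⟩ := by
  simpa [prefixSum] using zeroExtend_val x ⟨0, hk⟩

theorem prefixSum_of_le (x : Fin k → ℤ) {n : ℕ} (hn : k ≤ n) : prefixSum x n = ∑ i, x i := by
  rw [prefixSum, ← sum_range_add_sum_Ico _ hn, ← Fin.sum_univ_eq_sum_range,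
    sum_eq_zero fun i hi => zeroExtend_of_le x (mem_Ico.mp hi).1]
  simp [zeroExtend_val]

theorem prefixSum_sub (x y : Fin k → ℤ) (n : ℕ) :
    prefixSum (x - y) n = prefixSum x n - prefixSum y n := by
  simp [prefixSum, zeroExtend_sub, sum_sub_distrib]

theorem exists_prefixSum_ne_zero {d : Fin k → ℤ} (hd : d ≠ 0) : ∃ n, prefixSum d n ≠ 0 := by
  by_contra! h
  exact hd (funext fun i => by simpa [h] using (prefixSum_succ d i).symm)

end PrefixSums

theorem AdjG.abs_prefixWeight_sub {k q : ℕ} {u w : Fin k → ℤ} (huw : AdjG k q u w) (hk : 0 < k)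
    (h0 : u ⟨0, hk⟩ = w ⟨0, hk⟩) :
    0 < |prefixWeight u - prefixWeight w| ∧ |prefixWeight u - prefixWeight w| ≤ k - 2 := by
  obtain ⟨hne, hu, hw, hunit, -, halt⟩ := huw
  set d := u - w
  have hr : ∀ i, |zeroExtend d i| ≤ 1 := fun i => by
    unfold zeroExtend
    split_ifs
    · rcases hunit ⟨i, ‹_›⟩ with h | h | h <;> simp [d, h]
    · simp
  have ha := isAlternating_zeroExtend (d := d) halt
  have htail : ∀ n, k ≤ n → prefixSum d n = 0 := fun n hn => by
    rw [prefixSum_of_le d hn]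
    simp [d, sum_sub_distrib, hu.2, hw.2]
  obtain ⟨n, hn⟩ := exists_prefixSum_ne_zero (sub_ne_zero.mpr hne)
  have hn_mem : n ∈ Icc 2 (k - 1) := by
    have hn0 : n ≠ 0 := by rintro rfl; simp [prefixSum] at hn
    have hn1 : n ≠ 1 := by rintro rfl; simp [prefixSum_one d hk, d, h0] at hn
    have hnk : n < k := by_contra fun h => hn (htail n (not_lt.mp h))
    simp only [mem_Icc]
    omega
  have hdiff : prefixWeight u - prefixWeight w = ∑ j ∈ Icc 2 (k - 1), prefixSum d j := by
    simp only [prefixWeight, ← sum_sub_distrib, prefixSum_sub, d]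
  rw [hdiff, abs_sum_eq_card_filter_ne_zero _ (prefixSum d)
    (fun j _ => ha.abs_sum_range_le_one hr j) fun i _ j _ hi hj => ?_]
  · constructor
    · exact_mod_cast card_pos.mpr ⟨n, mem_filter.mpr ⟨hn_mem, hn⟩⟩
    · have hle : #{j ∈ Icc 2 (k - 1) | prefixSum d j ≠ 0} ≤ k - 2 :=
        (card_filter_le _ _).trans (by rw [Nat.card_Icc]; omega)
      have := mem_Icc.mp hn_mem
      omega
  · rcases le_total i j with hij | hji
    exacts [ha.sum_range_eq_of_ne_zero hr hij hi hj, (ha.sum_range_eq_of_ne_zero hr hji hj hi).symm]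

theorem IsCell.exists_apply_zero_ne_zero {k q : ℕ} {S : Finset (Fin k → ℤ)} (hS : IsCell k q S)
    (hk : 2 ≤ k) : ∃ v ∈ S, v ⟨0, zero_lt_two.trans_le hk⟩ ≠ 0 := by
  by_contra! h
  have hsep : ∀ u ∈ S, ∀ w ∈ S, u ≠ w →
      0 < |prefixWeight u - prefixWeight w| ∧ |prefixWeight u - prefixWeight w| ≤ k - 2 :=
    fun u hu w hw huw =>
      (hS.2.2 u hu w hw huw).abs_prefixWeight_sub (by omega) ((h u hu).trans (h w hw).symm)
  have hinj : Set.InjOn prefixWeight (S : Set (Fin k → ℤ)) := by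
    intro u hu w hw heq
    by_contra huw
    simpa [heq] using (hsep u hu w hw huw).1
  have hcard := card_le_of_abs_sub_le (T := S.image prefixWeight) (n := k - 2) <| by
    intro x hx y hy
    obtain ⟨u, hu, rfl⟩ := mem_image.mp hx
    obtain ⟨w, hw, rfl⟩ := mem_image.mp hy
    by_cases huw : u = w
    · simp [huw]
    · have := (hsep u hu w hw huw).2
      omega
  rw [card_image_of_injOn hinj, hS.1] at hcard
  omega

theorem isLeast_pos_eq_zero_iff {k : ℕ} {v : Fin k → ℤ} {i : Fin k}
    (hi : IsLeast {j | 0 < v j} i) (hk : 0 < k) : i = ⟨0, hk⟩ ↔ 0 < v ⟨0, hk⟩ :=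
  ⟨fun h => h ▸ hi.1, fun h => Fin.ext (Nat.le_zero.mp (hi.2 h))⟩

/-- Under the first-choice labeling `c`, a cell `S` of the regular
triangulation of `Δ_{k,q}` is non-monochromatic iff it contains a vertex whose
first coordinate equals `0`. -/
theorem first_choice_nonmono_iff (k q : ℕ) (hk : 2 ≤ k)
    (c : (Fin k → ℤ) → Fin k)
    (hc : ∀ v : Fin k → ℤ, inSimplex k q v → IsLeast {i : Fin k | 0 < v i} (c v))
    (S : Finset (Fin k → ℤ)) (hS : IsCell k q S) :
    NonMono c S ↔ ∃ v ∈ S, v ⟨0, by omega⟩ = 0 := by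
  have hlabel : ∀ v ∈ S, c v = ⟨0, by omega⟩ ↔ v ⟨0, by omega⟩ ≠ 0 := fun v hv =>
    (isLeast_pos_eq_zero_iff (hc v (hS.2.1 v hv)) _).trans ((hS.2.1 v hv).1 _).lt_iff_ne'
  constructor
  · rintro ⟨u, hu, v, hv, huv⟩
    by_contra! h
    exact huv (((hlabel u hu).2 (h u hu)).trans ((hlabel v hv).2 (h v hv)).symm)
  · rintro ⟨v, hv, hv0⟩
    obtain ⟨u, hu, hu0⟩ := hS.exists_apply_zero_ne_zero hk
    exact ⟨u, hu, v, hv, fun h => (hlabel v hv).1 (h ▸ (hlabel u hu).2 hu0) hv0⟩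
end

section
/- Let k ≥ 2 be an integer and q = 2. For every Sperner labeling c of Δ_{k,2} ∩ ℤ^k, at most one cell of the regular triangulation 𝒯 of Δ_{k,2} is monochromatic for c (i.e., has all vertices with the same label). -/
open Finset

/-- The basis-like vertices `e_a + e_j` of `Δ_{k,2}`. -/
def stdVert {k : ℕ} (a j : Fin k) : Fin k → ℤ := fun i =>
  (if i = a then 1 else 0) + (if i = j then 1 else 0)

lemma stdVert_inj {k : ℕ} (a : Fin k) : Function.Injective (stdVert a) := by
  intro j j' h
  by_contra hne
  have h2 := congrFun h j
  simp [stdVert, hne] at h2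

lemma mem_stdCell {k : ℕ} (a : Fin k) (v : Fin k → ℤ)
    (hv : inSimplex k 2 v) (ha : 1 ≤ v a) :
    ∃ j : Fin k, v = stdVert a j := by
  obtain ⟨hnn, hsum⟩ := hv
  have hle : v a ≤ 2 := by
    have := Finset.single_le_sum (f := v) (fun i _ => hnn i) (Finset.mem_univ a)
    omega
  have hsplit : v a + ∑ i ∈ Finset.univ.erase a, v i = 2 := by
    rw [Finset.add_sum_erase _ v (Finset.mem_univ a)]; exact hsum
  rcases (by omega : v a = 2 ∨ v a = 1) with hva | hva
  · refine ⟨a, funext fun i => ?_⟩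
    by_cases hia : i = a
    · simp [stdVert, hia, hva]
    · have h0 : ∀ i ∈ Finset.univ.erase a, v i = 0 := by
        rw [← Finset.sum_eq_zero_iff_of_nonneg (fun i _ => hnn i)]
        omega
      simp [stdVert, hia, h0 i (Finset.mem_erase.mpr ⟨hia, Finset.mem_univ i⟩)]
  · have hsum1 : ∑ i ∈ Finset.univ.erase a, v i = 1 := by omega
    have hex : ∃ j ∈ Finset.univ.erase a, 1 ≤ v j := by
      by_contra hno
      push_neg at hno
      have : ∑ i ∈ Finset.univ.erase a, v i = 0 := by
        apply Finset.sum_eq_zero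
        intro i hi
        have := hno i hi; have := hnn i; omega
      omega
    obtain ⟨j, hj, hj1⟩ := hex
    have hja : j ≠ a := (Finset.mem_erase.mp hj).1
    have hsplit2 : v j + ∑ i ∈ (Finset.univ.erase a).erase j, v i = 1 := by
      rw [Finset.add_sum_erase _ v hj]; exact hsum1
    have hnn2 : 0 ≤ ∑ i ∈ (Finset.univ.erase a).erase j, v i :=
      Finset.sum_nonneg (fun i _ => hnn i)
    have hvj : v j = 1 := by omega
    have h0 : ∀ i ∈ (Finset.univ.erase a).erase j, v i = 0 := by
      rw [← Finset.sum_eq_zero_iff_of_nonneg (fun i _ => hnn i)]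
      omega
    refine ⟨j, funext fun i => ?_⟩
    by_cases hia : i = a
    · simp [stdVert, hia, hva, Ne.symm hja]
    · by_cases hij : i = j
      · simp [stdVert, hij, hvj, hja]
      · simp [stdVert, hia, hij,
          h0 i (Finset.mem_erase.mpr ⟨hij, Finset.mem_erase.mpr ⟨hia, Finset.mem_univ i⟩⟩)]

lemma mono_cell_eq {k : ℕ} (hk : 2 ≤ k) (c : (Fin k → ℤ) → Fin k)
    (hc : IsSperner k 2 c) (S : Finset (Fin k → ℤ)) (h : IsCell k 2 S)
    (m : ∀ u ∈ S, ∀ v ∈ S, c u = c v) (a : Fin k) (v0 : Fin k → ℤ)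
    (hv0 : v0 ∈ S) (hca : c v0 = a) :
    S = Finset.univ.image (stdVert a) := by
  obtain ⟨hcard, hsim, _⟩ := h
  have himcard : (Finset.univ.image (stdVert a)).card = k := by
    rw [Finset.card_image_of_injective _ (stdVert_inj a), Finset.card_univ, Fintype.card_fin]
  apply Finset.eq_of_subset_of_card_le _ (by omega)
  intro v hv
  have hva : 1 ≤ v a := by
    have hcv : c v = a := by rw [m v hv v0 hv0, hca]
    have hne : v a ≠ 0 := fun h0 => hc v (hsim v hv) a h0 hcv
    have := (hsim v hv).1 a
    omega
  obtain ⟨j, hj⟩ := mem_stdCell a v (hsim v hv) hva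
  exact Finset.mem_image.mpr ⟨j, Finset.mem_univ j, hj.symm⟩

/-- For `q = 2`, every Sperner labeling of `Δ_{k,2} ∩ ℤ^k` admits at
most one monochromatic cell of the regular triangulation. -/
theorem at_most_one_mono_q2 (k : ℕ) (hk : 2 ≤ k)
    (c : (Fin k → ℤ) → Fin k) (hc : IsSperner k 2 c)
    (S1 S2 : Finset (Fin k → ℤ)) (h1 : IsCell k 2 S1) (h2 : IsCell k 2 S2)
    (m1 : ∀ u ∈ S1, ∀ v ∈ S1, c u = c v) (m2 : ∀ u ∈ S2, ∀ v ∈ S2, c u = c v) :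
    S1 = S2 := by
  obtain ⟨v1, hv1⟩ := Finset.card_pos.mp (by rw [h1.1]; omega : 0 < S1.card)
  obtain ⟨v2, hv2⟩ := Finset.card_pos.mp (by rw [h2.1]; omega : 0 < S2.card)
  set a := c v1 with ha
  set b := c v2 with hb
  have e1 : S1 = Finset.univ.image (stdVert a) :=
    mono_cell_eq hk c hc S1 h1 m1 a v1 hv1 rfl
  have e2 : S2 = Finset.univ.image (stdVert b) :=
    mono_cell_eq hk c hc S2 h2 m2 b v2 hv2 rfl
  have hab : a = b := by
    have hu1 : stdVert a b ∈ S1 := by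
      rw [e1]; exact Finset.mem_image.mpr ⟨b, Finset.mem_univ b, rfl⟩
    have hu2 : stdVert a b ∈ S2 := by
      rw [e2]
      refine Finset.mem_image.mpr ⟨a, Finset.mem_univ a, funext fun i => ?_⟩
      simp [stdVert, add_comm]
    have hca : c (stdVert a b) = a := m1 _ hu1 v1 hv1
    have hcb : c (stdVert a b) = b := m2 _ hu2 v2 hv2
    rw [← hca, hcb]
  rw [e1, e2, hab]
end

section
/- Let k ≥ 2 be an integer and q = 2. For every Sperner labeling c of Δ_{k,2} ∩ ℤ^k, the number of cells of the regular triangulation 𝒯 of Δ_{k,2} that are non-monochromatic for c is at least 2^{k−1} − 1. In particular, m_{k,2} ≥ 2^{k−1} − 1. -/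
open Finset

/-!
Every lattice point of `Δ_{k,2}` is `e_a + e_b`. By the Sperner condition, a cell on which `c` is
constantly `m` consists of points with positive `m`-th coordinate, so it is the star
`{e_m + e_j : j}`; two such stars share `e_m + e_m'`, so at most one cell is monochromatic.

On the other hand, each subset `S` of the `k - 1` steps gives a lattice path `(a_t, b_t)`, `t < k`,
starting at `(0, |S|)` and raising `a` at the steps in `S` and `b` at the others. Since
`a_t ≤ a_t' ≤ b_t ≤ b_t'` for `t ≤ t'`, the prefix sums of the difference of two points
`e_{a_t} + e_{b_t}` lie in `{0, 1}`, which forces the alternating sign pattern of `G_k`; so these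
points form a cell. Distinct `S` give distinct cells, hence `2^(k-1)` cells, all but one of them
non-monochromatic.
-/

namespace SpernerQ2

variable {k : ℕ}

def prefixSum (d : Fin k → ℤ) (n : ℕ) : ℤ := ∑ i with i.val < n, d i

lemma prefixSum_sub (v w : Fin k → ℤ) (n : ℕ) :
    prefixSum (v - w) n = prefixSum v n - prefixSum w n :=
  sum_sub_distrib ..

lemma prefixSum_of_le (d : Fin k → ℤ) {n : ℕ} (hn : k ≤ n) :
    prefixSum d n = ∑ i, d i := by
  rw [prefixSum, filter_true_of_mem fun i _ => i.isLt.trans_le hn]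

lemma prefixSum_succ (d : Fin k → ℤ) (i : Fin k) :
    prefixSum d (i + 1) = prefixSum d i + d i := by
  have : univ.filter (fun j : Fin k => (j : ℕ) < i + 1) =
      insert i (univ.filter fun j : Fin k => (j : ℕ) < i) := by
    ext j
    simp only [mem_filter, mem_univ, true_and, mem_insert, Fin.ext_iff]
    omega
  rw [prefixSum, prefixSum, this, sum_insert (by simp), add_comm]

lemma prefixSum_eq_of_forall_eq_zero (d : Fin k → ℤ) {m n : ℕ} (hmn : m ≤ n)
    (hd : ∀ l : Fin k, m ≤ l → (l : ℕ) < n → d l = 0) :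
    prefixSum d n = prefixSum d m := by
  induction n, hmn using Nat.le_induction with
  | base => rfl
  | succ n hmn ih =>
    rw [← ih fun l h1 h2 => hd l h1 (by omega)]
    by_cases hn : n < k
    · rw [prefixSum_succ d ⟨n, hn⟩, hd ⟨n, hn⟩ hmn (by simp), add_zero]
    · rw [prefixSum_of_le d (by omega), prefixSum_of_le d (by omega)]

lemma card_filter_eq_one_eq_card_filter_eq_neg_one (d : Fin k → ℤ)
    (hd : ∀ i, d i = -1 ∨ d i = 0 ∨ d i = 1) (hsum : ∑ i, d i = 0) :
    #{i | d i = 1} = #{i | d i = -1} := by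
  have hsplit : ∀ i, d i = (if d i = 1 then 1 else 0) - (if d i = -1 then 1 else 0) := by
    intro i
    rcases hd i with h | h | h <;> simp [h]
  rw [sum_congr rfl fun i _ => hsplit i, sum_sub_distrib, sum_boole, sum_boole,
    sub_eq_zero] at hsum
  exact_mod_cast hsum

lemma entry_mem_of_prefixSum_binary {d : Fin k → ℤ}
    (hd : ∀ n, prefixSum d n = 0 ∨ prefixSum d n = 1) (i : Fin k) :
    d i = -1 ∨ d i = 0 ∨ d i = 1 := by
  have := prefixSum_succ d i
  have := hd i
  have := hd (i + 1)
  omega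

lemma altSign_of_prefixSum_binary {d : Fin k → ℤ}
    (hd : ∀ n, prefixSum d n = 0 ∨ prefixSum d n = 1) : AltSign d := by
  intro i j hij hi hj hzero
  have hflat := prefixSum_eq_of_forall_eq_zero d (m := i + 1) (n := j) hij
    fun l h1 h2 => hzero l (Fin.lt_def.2 h1) (Fin.lt_def.2 h2)
  have := prefixSum_succ d i
  have := prefixSum_succ d j
  have := hd i
  have := hd (i + 1)
  have := hd (j + 1)
  omega

lemma adjG_of_prefixSum_binary {q : ℕ} {v w : Fin k → ℤ} (hv : inSimplex k q v)
    (hw : inSimplex k q w) (hne : v ≠ w)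
    (hd : ∀ n, prefixSum (v - w) n = 0 ∨ prefixSum (v - w) n = 1) : AdjG k q v w := by
  have hent := entry_mem_of_prefixSum_binary hd
  have hsum : ∑ i, (v - w) i = 0 := by
    simp only [Pi.sub_apply, sum_sub_distrib, hv.2, hw.2, sub_self]
  exact ⟨hne, hv, hw, hent, card_filter_eq_one_eq_card_filter_eq_neg_one _ hent hsum,
    altSign_of_prefixSum_binary hd⟩

lemma adjG_symm {q : ℕ} {v w : Fin k → ℤ} (h : AdjG k q v w) : AdjG k q w v := by
  obtain ⟨hne, hv, hw, hent, hcard, halt⟩ := h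
  refine ⟨hne.symm, hw, hv, fun i => by have := hent i; omega, ?_, ?_⟩
  · simp only [show ∀ i, w i - v i = 1 ↔ v i - w i = -1 from fun i => by omega,
      show ∀ i, w i - v i = -1 ↔ v i - w i = 1 from fun i => by omega, hcard]
  · intro i j hij hi hj hzero
    dsimp only at hi hj hzero ⊢
    have := halt i j hij (show v i - w i ≠ 0 by omega) (show v j - w j ≠ 0 by omega)
      fun l h1 h2 => show v l - w l = 0 by have := hzero l h1 h2; omega
    dsimp only at this
    omega

def basisPair (k a b : ℕ) : Fin k → ℤ := fun i =>
  (if (i : ℕ) = a then 1 else 0) + (if (i : ℕ) = b then 1 else 0)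

lemma prefixSum_indicator {a : ℕ} (ha : a < k) (n : ℕ) :
    prefixSum (fun i : Fin k => if (i : ℕ) = a then (1 : ℤ) else 0) n =
      if a < n then 1 else 0 := by
  have hval (i : Fin k) : (i : ℕ) = a ↔ i = ⟨a, ha⟩ := (Fin.ext_iff (b := ⟨a, ha⟩)).symm
  simp only [prefixSum, hval, sum_ite_eq', mem_filter, mem_univ, true_and]

lemma prefixSum_basisPair {a b : ℕ} (ha : a < k) (hb : b < k) (n : ℕ) :
    prefixSum (basisPair k a b) n = (if a < n then 1 else 0) + (if b < n then 1 else 0) := by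
  rw [← prefixSum_indicator ha, ← prefixSum_indicator hb]
  exact sum_add_distrib

lemma basisPair_mem_simplex {a b : ℕ} (ha : a < k) (hb : b < k) :
    inSimplex k 2 (basisPair k a b) := by
  refine ⟨fun i => by unfold basisPair; split_ifs <;> norm_num, ?_⟩
  rw [← prefixSum_of_le _ le_rfl, prefixSum_basisPair ha hb, if_pos ha, if_pos hb]
  norm_num

lemma basisPair_pos_iff (a b : ℕ) (i : Fin k) :
    0 < basisPair k a b i ↔ (i : ℕ) = a ∨ (i : ℕ) = b := by
  unfold basisPair
  split_ifs <;> simp_all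

lemma basisPair_injective {a b c d : ℕ} (hab : a ≤ b) (hcd : c ≤ d) (hb : b < k) (hd : d < k)
    (h : basisPair k a b = basisPair k c d) : a = c ∧ b = d := by
  have key (i : ℕ) (hi : i < k) : (i = a ∨ i = b) ↔ (i = c ∨ i = d) := by
    have := basisPair_pos_iff (k := k) a b ⟨i, hi⟩
    rw [h, basisPair_pos_iff] at this
    exact this.symm
  have := key a (by omega)
  have := key b hb
  have := key c (by omega)
  have := key d hd
  omega

section PathCell

variable (S : Finset ℕ)

/- For `S ⊆ range (k - 1)`, `pathCell S k = {e_{a_t} + e_{b_t} : t < k}` where `(a_t, b_t)` is the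
lattice path from `(0, #S)` that raises `a` at the steps `s ∈ S` and `b` at the others. -/
def lowIdx (t : ℕ) : ℕ := #(range t ∩ S)

def highIdx (t : ℕ) : ℕ := #S + #(range t \ S)

def pathVertex (k : ℕ) (t : ℕ) : Fin k → ℤ := basisPair k (lowIdx S t) (highIdx S t)

def pathCell (k : ℕ) : Finset (Fin k → ℤ) := (range k).image (pathVertex S k)

lemma lowIdx_add_highIdx (t : ℕ) : lowIdx S t + highIdx S t = #S + t := by
  have := card_sdiff_add_card_inter (range t) S
  rw [card_range] at this
  unfold lowIdx highIdx
  omega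

lemma lowIdx_mono {t t' : ℕ} (h : t ≤ t') : lowIdx S t ≤ lowIdx S t' :=
  card_le_card (inter_subset_inter_right (range_subset_range.2 h))

lemma highIdx_mono {t t' : ℕ} (h : t ≤ t') : highIdx S t ≤ highIdx S t' :=
  Nat.add_le_add_left (card_le_card (sdiff_subset_sdiff (range_subset_range.2 h) le_rfl)) _

lemma lowIdx_le_highIdx (t t' : ℕ) : lowIdx S t ≤ highIdx S t' :=
  (card_le_card inter_subset_right).trans (Nat.le_add_right _ _)

lemma lowIdx_zero : lowIdx S 0 = 0 := by simp [lowIdx]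

lemma highIdx_zero : highIdx S 0 = #S := by simp [highIdx]

lemma lowIdx_succ (t : ℕ) : lowIdx S (t + 1) = lowIdx S t + if t ∈ S then 1 else 0 := by
  unfold lowIdx
  split_ifs with ht
  · rw [range_add_one, insert_inter_of_mem ht, card_insert_of_notMem (by simp)]
  · rw [range_add_one, insert_inter_of_notMem ht, add_zero]

variable {S}

lemma highIdx_lt (hS : S ⊆ range (k - 1)) {t : ℕ} (ht : t < k) : highIdx S t < k := by
  have hunion : #S + #(range t \ S) = #(S ∪ range t) := by
    rw [← union_sdiff_self_eq_union, card_union_of_disjoint disjoint_sdiff]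
  have := card_le_card (union_subset hS (range_subset_range.2 (Nat.le_sub_one_of_lt ht)))
  rw [card_range] at this
  unfold highIdx
  omega


lemma pathVertex_mem_simplex (hS : S ⊆ range (k - 1)) {t : ℕ} (ht : t < k) :
    inSimplex k 2 (pathVertex S k t) :=
  basisPair_mem_simplex ((lowIdx_le_highIdx S t t).trans_lt (highIdx_lt hS ht)) (highIdx_lt hS ht)

lemma lowIdx_eq_and_highIdx_eq_of_pathVertex_eq {S' : Finset ℕ} (hS : S ⊆ range (k - 1))
    (hS' : S' ⊆ range (k - 1)) {t t' : ℕ} (ht : t < k) (ht' : t' < k)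
    (h : pathVertex S k t = pathVertex S' k t') :
    lowIdx S t = lowIdx S' t' ∧ highIdx S t = highIdx S' t' :=
  basisPair_injective (lowIdx_le_highIdx S t t) (lowIdx_le_highIdx S' t' t')
    (highIdx_lt hS ht) (highIdx_lt hS' ht') h

lemma pathVertex_injOn (hS : S ⊆ range (k - 1)) : Set.InjOn (pathVertex S k) (range k) := by
  intro t ht t' ht' h
  have := lowIdx_eq_and_highIdx_eq_of_pathVertex_eq hS hS (mem_range.1 ht) (mem_range.1 ht') h
  have := lowIdx_add_highIdx S t
  have := lowIdx_add_highIdx S t'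
  omega

lemma adjG_pathVertex (hS : S ⊆ range (k - 1)) {t t' : ℕ} (htt' : t < t') (ht' : t' < k) :
    AdjG k 2 (pathVertex S k t) (pathVertex S k t') := by
  have ht : t < k := htt'.trans ht'
  have hne : pathVertex S k t ≠ pathVertex S k t' := fun h =>
    htt'.ne (pathVertex_injOn hS (mem_range.2 ht) (mem_range.2 ht') h)
  refine adjG_of_prefixSum_binary (pathVertex_mem_simplex hS ht)
    (pathVertex_mem_simplex hS ht') hne fun n => ?_
  have hlow := lowIdx_mono S htt'.le
  have hhigh := highIdx_mono S htt'.le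
  have hmid := lowIdx_le_highIdx S t' t
  have hlt := (lowIdx_le_highIdx S t t).trans_lt (highIdx_lt hS ht)
  have hlt' := (lowIdx_le_highIdx S t' t').trans_lt (highIdx_lt hS ht')
  rw [prefixSum_sub, pathVertex, pathVertex, prefixSum_basisPair hlt (highIdx_lt hS ht),
    prefixSum_basisPair hlt' (highIdx_lt hS ht')]
  split_ifs <;> omega

lemma isCell_pathCell (hS : S ⊆ range (k - 1)) : IsCell k 2 (pathCell S k) := by
  refine ⟨by rw [pathCell, card_image_of_injOn (pathVertex_injOn hS), card_range], ?_, ?_⟩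
  · simp only [pathCell, mem_image, mem_range, forall_exists_index, and_imp]
    rintro _ t ht rfl
    exact pathVertex_mem_simplex hS ht
  · simp only [pathCell, mem_image, mem_range, forall_exists_index, and_imp]
    rintro _ t ht rfl _ t' ht' rfl hne
    rcases lt_trichotomy t t' with hlt | rfl | hgt
    · exact adjG_pathVertex hS hlt ht'
    · exact absurd rfl hne
    · exact adjG_symm (adjG_pathVertex hS hgt ht)

variable {S' : Finset ℕ}

lemma card_le_of_pathCell_subset (hk : 0 < k) (hS : S ⊆ range (k - 1))
    (hS' : S' ⊆ range (k - 1)) (h : pathCell S k ⊆ pathCell S' k) : #S' ≤ #S := by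
  obtain ⟨t', ht', heq⟩ := mem_image.1 (h (mem_image_of_mem _ (mem_range.2 hk)))
  have hidx := lowIdx_eq_and_highIdx_eq_of_pathVertex_eq hS' hS (mem_range.1 ht') hk heq
  rw [lowIdx_zero, highIdx_zero] at hidx
  have := lowIdx_add_highIdx S' t'
  omega

-- The time of a vertex is recovered from `lowIdx + highIdx`, so equal cells agree vertex by vertex.
lemma lowIdx_eq_of_pathCell_eq (hk : 0 < k) (hS : S ⊆ range (k - 1))
    (hS' : S' ⊆ range (k - 1)) (h : pathCell S k = pathCell S' k) {t : ℕ} (ht : t < k) :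
    lowIdx S t = lowIdx S' t := by
  have hcard := (card_le_of_pathCell_subset hk hS hS' h.le).antisymm
    (card_le_of_pathCell_subset hk hS' hS h.ge)
  have hmem : pathVertex S k t ∈ pathCell S' k := h ▸ mem_image_of_mem _ (mem_range.2 ht)
  obtain ⟨t', ht', heq⟩ := mem_image.1 hmem
  have hidx := lowIdx_eq_and_highIdx_eq_of_pathVertex_eq hS' hS (mem_range.1 ht') ht heq
  have := lowIdx_add_highIdx S t
  have := lowIdx_add_highIdx S' t'
  obtain rfl : t' = t := by omega
  exact hidx.1.symm

lemma eq_of_lowIdx_eq (hS : S ⊆ range (k - 1)) (hS' : S' ⊆ range (k - 1))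
    (h : ∀ t < k, lowIdx S t = lowIdx S' t) : S = S' := by
  ext s
  by_cases hs : s < k - 1
  · have h₀ := h s (by omega)
    have h₁ := h (s + 1) (by omega)
    rw [lowIdx_succ, lowIdx_succ] at h₁
    split_ifs at h₁ <;> simp_all
  · exact iff_of_false (fun hm => hs (mem_range.1 (hS hm))) fun hm => hs (mem_range.1 (hS' hm))

lemma pathCell_injOn (hk : 0 < k) :
    Set.InjOn (pathCell · k) ((range (k - 1)).powerset : Set (Finset ℕ)) := by
  intro S hS S' hS' h
  rw [mem_coe, mem_powerset] at hS hS'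
  exact eq_of_lowIdx_eq hS hS' fun t ht => lowIdx_eq_of_pathCell_eq hk hS hS' h ht

end PathCell

lemma exists_eq_single_of_sum_eq_one {ι : Type*} [Fintype ι] [DecidableEq ι] {d : ι → ℤ}
    (hd : ∀ i, 0 ≤ d i) (hsum : ∑ i, d i = 1) : ∃ j, d = Pi.single j 1 := by
  obtain ⟨j, -, hj⟩ := exists_ne_zero_of_sum_ne_zero (hsum ▸ one_ne_zero)
  have hsplit := add_sum_erase univ d (mem_univ j)
  have hrest : 0 ≤ ∑ i ∈ univ.erase j, d i := sum_nonneg fun i _ => hd i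
  have hdj : d j = 1 := by have := hd j; omega
  have hzero := (sum_eq_zero_iff_of_nonneg fun i _ => hd i).1
    (by omega : ∑ i ∈ univ.erase j, d i = 0)
  refine ⟨j, funext fun i => ?_⟩
  by_cases hij : i = j
  · subst hij
    simp [hdj]
  · simp [hij, hzero i (mem_erase.2 ⟨hij, mem_univ i⟩)]

lemma exists_eq_single_add_single {v : Fin k → ℤ} (hv : inSimplex k 2 v) {m : Fin k}
    (hm : v m ≠ 0) : ∃ j, v = Pi.single m 1 + Pi.single j 1 := by
  have hnonneg (i : Fin k) : 0 ≤ (v - Pi.single m 1 : Fin k → ℤ) i := by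
    have := hv.1 i
    by_cases him : i = m
    · subst him
      simp only [Pi.sub_apply, Pi.single_eq_same]
      omega
    · simp [him, this]
  have hsum : ∑ i, (v - Pi.single m 1 : Fin k → ℤ) i = 1 := by
    simp only [Pi.sub_apply, sum_sub_distrib, hv.2, sum_pi_single']
    norm_num
  obtain ⟨j, hj⟩ := exists_eq_single_of_sum_eq_one hnonneg hsum
  exact ⟨j, by rw [← hj, add_sub_cancel]⟩

def starAt (k : ℕ) (m : Fin k) : Finset (Fin k → ℤ) :=
  univ.image fun j => Pi.single m 1 + Pi.single j 1

variable {c : (Fin k → ℤ) → Fin k} {S : Finset (Fin k → ℤ)}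

lemma eq_starAt_of_forall_color_eq (hc : IsSperner k 2 c) (hS : IsCell k 2 S) {m : Fin k}
    (hcol : ∀ v ∈ S, c v = m) : S = starAt k m := by
  refine eq_of_subset_of_card_le (fun v hv => ?_) ?_
  · obtain ⟨j, rfl⟩ := exists_eq_single_add_single (hS.2.1 v hv) fun h0 =>
      hc v (hS.2.1 v hv) m h0 (hcol v hv)
    exact mem_image_of_mem _ (mem_univ j)
  · rw [hS.1]
    exact card_image_le.trans (card_univ.trans (Fintype.card_fin k)).le

lemma exists_forall_color_eq {q : ℕ} (hk : 0 < k) (hS : IsCell k q S) (hmono : ¬NonMono c S) :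
    ∃ m, ∀ v ∈ S, c v = m := by
  obtain ⟨v₀, hv₀⟩ := card_pos.1 (hS.1 ▸ hk)
  refine ⟨c v₀, fun v hv => ?_⟩
  by_contra hne
  exact hmono ⟨v, hv, v₀, hv₀, hne⟩

lemma subsingleton_monochromatic_cells (hk : 0 < k) (hc : IsSperner k 2 c) :
    {S | IsCell k 2 S ∧ ¬NonMono c S}.Subsingleton := by
  rintro S ⟨hS, hSmono⟩ T ⟨hT, hTmono⟩
  obtain ⟨m, hm⟩ := exists_forall_color_eq hk hS hSmono
  obtain ⟨m', hm'⟩ := exists_forall_color_eq hk hT hTmono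
  obtain rfl := eq_starAt_of_forall_color_eq hc hS hm
  obtain rfl := eq_starAt_of_forall_color_eq hc hT hm'
  have hcommon := hm _ (mem_image_of_mem _ (mem_univ m'))
  rw [add_comm, hm' _ (mem_image_of_mem _ (mem_univ m))] at hcommon
  rw [hcommon]

lemma finite_setOf_inSimplex (k q : ℕ) : {v : Fin k → ℤ | inSimplex k q v}.Finite := by
  refine (Set.Finite.pi fun _ => Set.finite_Icc (0 : ℤ) q).subset fun v hv i _ => ?_
  exact ⟨hv.1 i, hv.2 ▸ single_le_sum (fun j _ => hv.1 j) (mem_univ i)⟩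

lemma finite_setOf_isCell (k q : ℕ) : {S | IsCell k q S}.Finite :=
  (finite_toSet (finite_setOf_inSimplex k q).toFinset.powerset).subset fun _ hS =>
    mem_powerset.2 fun v hv => (Set.Finite.mem_toFinset _).2 (hS.2.1 v hv)

end SpernerQ2

open SpernerQ2

/-- For `q = 2`, every Sperner labeling of `Δ_{k,2} ∩ ℤ^k` has at
least `2^(k-1) - 1` non-monochromatic cells. -/
theorem lower_bound_q2 (k : ℕ) (hk : 2 ≤ k)
    (c : (Fin k → ℤ) → Fin k) (hc : IsSperner k 2 c) :
    2 ^ (k - 1) - 1 ≤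
      {S : Finset (Fin k → ℤ) | IsCell k 2 S ∧ NonMono c S}.ncard := by
  classical
  set F := (range (k - 1)).powerset.image (pathCell · k)
  have hcells : ∀ S ∈ F, IsCell k 2 S := by
    simp only [F, mem_image, mem_powerset, forall_exists_index, and_imp]
    rintro _ S hS rfl
    exact isCell_pathCell hS
  have hcard : #F = 2 ^ (k - 1) := by
    rw [card_image_of_injOn (pathCell_injOn (by omega)), card_powerset, card_range]
  have hmono : #{S ∈ F | ¬NonMono c S} ≤ 1 := card_le_one.2 fun S hS T hT =>
    subsingleton_monochromatic_cells (by omega) hc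
      ⟨hcells S (mem_filter.1 hS).1, (mem_filter.1 hS).2⟩
      ⟨hcells T (mem_filter.1 hT).1, (mem_filter.1 hT).2⟩
  have hsplit := card_filter_add_card_filter_not (s := F) (p := fun S => NonMono c S)
  calc 2 ^ (k - 1) - 1 ≤ #{S ∈ F | NonMono c S} := by omega
    _ = (({S ∈ F | NonMono c S} : Finset _) : Set (Finset (Fin k → ℤ))).ncard :=
      (Set.ncard_coe_finset _).symm
    _ ≤ _ := Set.ncard_le_ncard (fun S hS => by
        obtain ⟨hSF, hS⟩ := mem_filter.1 (mem_coe.1 hS)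
        exact ⟨hcells S hSF, hS⟩)
      ((finite_setOf_isCell k 2).subset fun _ hS => hS.1)
end

section
/- Let k ≥ 2 and q ≥ 1 be integers, let w ∈ W_{k,q} and let π be a permutation of {1, …, k−1} consistent with w. If w¹ and w² are integer points of σ(w, π), then either every entry of w¹ − w² lies in {0, 1} or every entry of w¹ − w² lies in {−1, 0}. -/
open Finset

/-- If `w¹` and `w²` are integer points of `σ(w,π)` then either every
entry of `w¹ - w²` lies in `{0,1}` or every entry lies in `{-1,0}`. -/
theorem integer_points_of_sigma (k q : ℕ) (hk : 2 ≤ k) (hq : 1 ≤ q)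
    (w : Fin (k-1) → ℤ) (hw : inW k q w) (π : Equiv.Perm (Fin (k-1)))
    (hπ : Consistent k w π) (w1 w2 : Fin (k-1) → ℤ)
    (h1 : toR w1 ∈ simplexSet k w π) (h2 : toR w2 ∈ simplexSet k w π) :
    (∀ i, w1 i - w2 i = 0 ∨ w1 i - w2 i = 1) ∨
      (∀ i, w1 i - w2 i = -1 ∨ w1 i - w2 i = 0) := by
  obtain ⟨-, h1a, h1b, h1c⟩ := h1
  obtain ⟨-, h2a, h2b, h2c⟩ := h2
  set d1 : Fin (k-1) → ℤ := fun s => w1 (π s) - w (π s) with hd1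
  set d2 : Fin (k-1) → ℤ := fun s => w2 (π s) - w (π s) with hd2
  have hb1 : ∀ s, d1 s = 0 ∨ d1 s = 1 := by
    intro s
    have h0 := h1a s; have h1 := h1b s
    simp only [toR] at h0 h1
    have : (0:ℝ) ≤ ((d1 s : ℤ) : ℝ) := by push_cast [hd1]; linarith
    have : ((d1 s : ℤ) : ℝ) ≤ 1 := by push_cast [hd1]; linarith
    have a1 : 0 ≤ d1 s := by exact_mod_cast ‹(0:ℝ) ≤ ((d1 s : ℤ) : ℝ)›
    have a2 : d1 s ≤ 1 := by exact_mod_cast this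
    omega
  have hb2 : ∀ s, d2 s = 0 ∨ d2 s = 1 := by
    intro s
    have h0 := h2a s; have h1 := h2b s
    simp only [toR] at h0 h1
    have : (0:ℝ) ≤ ((d2 s : ℤ) : ℝ) := by push_cast [hd2]; linarith
    have : ((d2 s : ℤ) : ℝ) ≤ 1 := by push_cast [hd2]; linarith
    have a1 : 0 ≤ d2 s := by exact_mod_cast ‹(0:ℝ) ≤ ((d2 s : ℤ) : ℝ)›
    have a2 : d2 s ≤ 1 := by exact_mod_cast this
    omega
  have hm1 : ∀ s t, s ≤ t → d1 s ≤ d1 t := by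
    intro s t hst
    have := h1c s t hst
    simp only [toR] at this
    have : ((d1 s : ℤ) : ℝ) ≤ ((d1 t : ℤ) : ℝ) := by push_cast [hd1]; linarith
    exact_mod_cast this
  have hm2 : ∀ s t, s ≤ t → d2 s ≤ d2 t := by
    intro s t hst
    have := h2c s t hst
    simp only [toR] at this
    have : ((d2 s : ℤ) : ℝ) ≤ ((d2 t : ℤ) : ℝ) := by push_cast [hd2]; linarith
    exact_mod_cast this
  have key : (∀ s, d2 s ≤ d1 s) ∨ (∀ s, d1 s ≤ d2 s) := by
    by_contra h
    push_neg at h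
    obtain ⟨⟨s, hs⟩, ⟨t, ht⟩⟩ := h
    rcases le_total s t with h' | h'
    · have := hm2 s t h'; have := hb1 s; have := hb2 s; have := hb1 t; have := hb2 t; omega
    · have := hm1 t s h'; have := hb1 s; have := hb2 s; have := hb1 t; have := hb2 t; omega
  have heq : ∀ i, w1 i - w2 i = d1 (π.symm i) - d2 (π.symm i) := by
    intro i
    simp [hd1, hd2]
  rcases key with h | h
  · left; intro i
    rw [heq i]
    have := h (π.symm i); have := hb1 (π.symm i); have := hb2 (π.symm i); omega
  · right; intro i
    rw [heq i]
    have := h (π.symm i); have := hb1 (π.symm i); have := hb2 (π.symm i); omega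
end
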